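/- arXiv:2104.03052 — 5 statements merged into one kernel-verified Lean document; each statement's English description precedes it below -/
import Mathlib

section
/- Let L be a ★-compact abstract bi-intuitionistic logic extending BIL, and suppose L is not expressively equivalent to BIL. Then there exist a signature Θ_φ, a formula φ ∈ L(Θ_φ), and pointed Θ_φ-models (M₁,w₁) and (M₂,w₂) such that Th⁺_BIL(M₁,w₁) ⊆ Th⁺_BIL(M₂,w₂), while M₁,w₁ ⊨_L φ and M₂,w₂ ⊭_L φ. -/
/-! Common vocabulary for bi-intuitionistic propositional logic (BIL),
Kripke models, bi-asimulations, abstract bi-intuitionistic logics and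
bi-unravellings, following Olkhovikov & Badia,
"Maximality of bi-intuitionistic propositional logic". -/

/-- Formulas of bi-intuitionistic propositional logic over the type `A` of
propositional letters. -/
inductive BILForm (A : Type) : Type
  | bot : BILForm A
  | atom : A → BILForm A
  | conj : BILForm A → BILForm A → BILForm A
  | disj : BILForm A → BILForm A → BILForm A
  | impl : BILForm A → BILForm A → BILForm A
  | coimpl : BILForm A → BILForm A → BILForm A

namespace BILForm

/-- The propositional letters occurring in a formula; a formula belongs to
`BIL(Θ)` iff its letters are contained in `Θ`. -/
def letters {A : Type} : BILForm A → Set A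
  | bot => ∅
  | atom p => {p}
  | conj φ ψ => letters φ ∪ letters ψ
  | disj φ ψ => letters φ ∪ letters ψ
  | impl φ ψ => letters φ ∪ letters ψ
  | coimpl φ ψ => letters φ ∪ letters ψ

end BILForm

/-- A (bi-intuitionistic) Kripke model with propositional letters `A`,
carried on the subset `dom` of the type `Ω`: a nonempty set of worlds,
partially ordered by `rel`, together with a monotone valuation. -/
structure SKModel (A : Type) (Ω : Type) : Type where
  dom : Set Ω
  nonempty : dom.Nonempty
  rel : Ω → Ω → Prop
  rel_mem : ∀ {u v}, rel u v → u ∈ dom ∧ v ∈ dom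
  rel_refl : ∀ u ∈ dom, rel u u
  rel_trans : ∀ {u v w}, rel u v → rel v w → rel u w
  rel_antisymm : ∀ {u v}, rel u v → rel v u → u = v
  val : A → Set Ω
  val_mem : ∀ p, val p ⊆ dom
  val_mono : ∀ (p : A) {u v}, rel u v → u ∈ val p → v ∈ val p

/-- Kripke satisfaction for bi-intuitionistic formulas. -/
def BILSat {A Ω : Type} (M : SKModel A Ω) : BILForm A → Ω → Prop
  | .bot, _ => False
  | .atom p, w => w ∈ M.val p
  | .conj φ ψ, w => BILSat M φ w ∧ BILSat M ψ w
  | .disj φ ψ, w => BILSat M φ w ∨ BILSat M ψ w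
  | .impl φ ψ, w => ∀ v, M.rel w v → BILSat M φ v → BILSat M ψ v
  | .coimpl φ ψ, w => ∃ v, M.rel v w ∧ BILSat M φ v ∧ ¬ BILSat M ψ v

/-- `(Γ, Δ)` is satisfied at `(M, w)`: all of `Γ` true, all of `Δ` false. -/
def BILSatTh {A Ω : Type} (M : SKModel A Ω) (w : Ω) (Γ Δ : Set (BILForm A)) : Prop :=
  (∀ φ ∈ Γ, BILSat M φ w) ∧ (∀ φ ∈ Δ, ¬ BILSat M φ w)

/-- `Th⁺_BIL(M₁,w₁) ⊆ Th⁺_BIL(M₂,w₂)` over the signature `Θ`. -/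
def BILThPosSubset {A Ω₁ Ω₂ : Type} (Θ : Set A) (M₁ : SKModel A Ω₁) (w₁ : Ω₁)
    (M₂ : SKModel A Ω₂) (w₂ : Ω₂) : Prop :=
  ∀ φ : BILForm A, φ.letters ⊆ Θ → BILSat M₁ φ w₁ → BILSat M₂ φ w₂

/-- `Th_BIL(M₁,w₁) = Th_BIL(M₂,w₂)` over the signature `Θ`. -/
def BILThEq {A Ω₁ Ω₂ : Type} (Θ : Set A) (M₁ : SKModel A Ω₁) (w₁ : Ω₁)
    (M₂ : SKModel A Ω₂) (w₂ : Ω₂) : Prop :=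
  ∀ φ : BILForm A, φ.letters ⊆ Θ → (BILSat M₁ φ w₁ ↔ BILSat M₂ φ w₂)

/-- A bi-asimulation (over the signature `Θ`) from `(M₁,w₁)` to `(M₂,w₂)`,
given by its two components `R ⊆ W₁ × W₂` and `S ⊆ W₂ × W₁`. -/
structure IsBiAsim {A Ω₁ Ω₂ : Type} (Θ : Set A) (M₁ : SKModel A Ω₁) (M₂ : SKModel A Ω₂)
    (w₁ : Ω₁) (w₂ : Ω₂) (R : Ω₁ → Ω₂ → Prop) (S : Ω₂ → Ω₁ → Prop) : Prop where
  memR : ∀ {v s}, R v s → v ∈ M₁.dom ∧ s ∈ M₂.dom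
  memS : ∀ {v s}, S v s → v ∈ M₂.dom ∧ s ∈ M₁.dom
  elem : R w₁ w₂
  atomR : ∀ p ∈ Θ, ∀ {v s}, R v s → v ∈ M₁.val p → s ∈ M₂.val p
  atomS : ∀ p ∈ Θ, ∀ {v s}, S v s → v ∈ M₂.val p → s ∈ M₁.val p
  backR : ∀ {v s t}, R v s → M₂.rel s t → ∃ u, M₁.rel v u ∧ S t u ∧ R u t
  backS : ∀ {v s t}, S v s → M₁.rel s t → ∃ u, M₂.rel v u ∧ R t u ∧ S u t
  forthR : ∀ {v s u}, R v s → M₁.rel u v → ∃ t, M₂.rel t s ∧ S t u ∧ R u t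
  forthS : ∀ {v s u}, S v s → M₂.rel u v → ∃ t, M₁.rel t s ∧ R t u ∧ S u t

/-- `M` is a submodel of `N`. -/
def Submodel {A Ω : Type} (M N : SKModel A Ω) : Prop :=
  M.dom ⊆ N.dom ∧ (∀ u ∈ M.dom, ∀ v ∈ M.dom, (M.rel u v ↔ N.rel u v)) ∧
    ∀ p, M.val p = N.val p ∩ M.dom

/-- `U` is the union of the countable chain `Mc` of models. -/
def IsUnionOfChain {A Ω : Type} (Mc : ℕ → SKModel A Ω) (U : SKModel A Ω) : Prop :=
  U.dom = ⋃ n, (Mc n).dom ∧ (∀ u v, U.rel u v ↔ ∃ n, (Mc n).rel u v) ∧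
    ∀ p, U.val p = ⋃ n, (Mc n).val p

/-- `N'` has the same frame as `N` and the same valuation on the letters in
`Θ` (this expresses both `Σ`-expansions and `Σ`-reducts). -/
def IsExpansion {A Ω : Type} (Θ : Set A) (N N' : SKModel A Ω) : Prop :=
  N'.dom = N.dom ∧ (∀ u v, N'.rel u v ↔ N.rel u v) ∧ ∀ p ∈ Θ, N'.val p = N.val p

/-- `M ≼_BIL N` over the signature `Θ`. -/
def BILElemSub {A Ω : Type} (Θ : Set A) (M N : SKModel A Ω) : Prop :=
  Submodel M N ∧ ∀ w ∈ M.dom, ∀ φ : BILForm A, φ.letters ⊆ Θ →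
    (BILSat M φ w ↔ BILSat N φ w)

/-- `(Γ,Δ)` is a successor BIL-type of `(M,v)` (over the signature `Θ`). -/
def BILSuccType {A Ω : Type} (Θ : Set A) (M : SKModel A Ω) (v : Ω)
    (Γ Δ : Set (BILForm A)) : Prop :=
  (∀ φ ∈ Γ, BILForm.letters φ ⊆ Θ) ∧ (∀ φ ∈ Δ, BILForm.letters φ ⊆ Θ) ∧
    ∀ Γ' ⊆ Γ, ∀ Δ' ⊆ Δ, Γ'.Finite → Δ'.Finite →
      ∃ u, M.rel v u ∧ BILSatTh M u Γ' Δ'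

/-- `(Γ,Δ)` is a predecessor BIL-type of `(M,v)` (over the signature `Θ`). -/
def BILPredType {A Ω : Type} (Θ : Set A) (M : SKModel A Ω) (v : Ω)
    (Γ Δ : Set (BILForm A)) : Prop :=
  (∀ φ ∈ Γ, BILForm.letters φ ⊆ Θ) ∧ (∀ φ ∈ Δ, BILForm.letters φ ⊆ Θ) ∧
    ∀ Γ' ⊆ Γ, ∀ Δ' ⊆ Δ, Γ'.Finite → Δ'.Finite →
      ∃ u, M.rel u v ∧ BILSatTh M u Γ' Δ'

/-- `M` is BIL-saturated (over the signature `Θ`): it realizes all of its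
successor and predecessor BIL-types. -/
def BILSaturated {A Ω : Type} (Θ : Set A) (M : SKModel A Ω) : Prop :=
  ∀ v ∈ M.dom, ∀ Γ Δ : Set (BILForm A),
    (BILSuccType Θ M v Γ Δ → ∃ u, M.rel v u ∧ BILSatTh M u Γ Δ) ∧
    (BILPredType Θ M v Γ Δ → ∃ u, M.rel u v ∧ BILSatTh M u Γ Δ)

/-- An isomorphism `g` of Kripke `Θ`-models from `M` onto `N`. -/
def BILIso {A Ω₁ Ω₂ : Type} (Θ : Set A) (M : SKModel A Ω₁) (N : SKModel A Ω₂)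
    (g : Ω₁ → Ω₂) : Prop :=
  Set.InjOn g M.dom ∧ g '' M.dom = N.dom ∧
  (∀ u ∈ M.dom, ∀ v ∈ M.dom, (M.rel u v ↔ N.rel (g u) (g v))) ∧
  (∀ p ∈ Θ, ∀ u ∈ M.dom, (u ∈ M.val p ↔ g u ∈ N.val p))

/-- An abstract bi-intuitionistic logic over the propositional letters `A`:
a set `In Θ` of `Θ`-formulas for every signature `Θ ⊆ A`, and a satisfaction
relation enjoying the Isomorphism, Expansion, Occurrence and Closure
properties. -/
structure AbsLogic (A : Type) : Type 1 where
  F : Type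
  In : Set A → Set F
  Sat : ∀ {Ω : Type}, SKModel A Ω → Ω → F → Prop
  in_mono : ∀ {Θ Θ' : Set A}, Θ ⊆ Θ' → In Θ ⊆ In Θ'
  iso_invariant : ∀ (Θ : Set A) {Ω₁ Ω₂ : Type} (M : SKModel A Ω₁) (N : SKModel A Ω₂)
      (g : Ω₁ → Ω₂), BILIso Θ M N g →
      ∀ φ ∈ In Θ, ∀ w ∈ M.dom, (Sat M w φ ↔ Sat N (g w) φ)
  expansion : ∀ (Θ : Set A) {Ω : Type} (M M' : SKModel A Ω), M.dom = M'.dom →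
      (∀ u v, M.rel u v ↔ M'.rel u v) → (∀ p ∈ Θ, M.val p = M'.val p) →
      ∀ φ ∈ In Θ, ∀ w, (Sat M w φ ↔ Sat M' w φ)
  occurrence : ∀ (Θ : Set A) (φ : F), φ ∈ In Θ →
      ∃ Θ₀ : Set A, Θ₀.Finite ∧ Θ₀ ⊆ Θ ∧ φ ∈ In Θ₀
  fbot : F
  fconj : F → F → F
  fdisj : F → F → F
  fimpl : F → F → F
  fcoimpl : F → F → F
  mem_bot : ∀ Θ, fbot ∈ In Θ
  mem_conj : ∀ {Θ φ ψ}, φ ∈ In Θ → ψ ∈ In Θ → fconj φ ψ ∈ In Θ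
  mem_disj : ∀ {Θ φ ψ}, φ ∈ In Θ → ψ ∈ In Θ → fdisj φ ψ ∈ In Θ
  mem_impl : ∀ {Θ φ ψ}, φ ∈ In Θ → ψ ∈ In Θ → fimpl φ ψ ∈ In Θ
  mem_coimpl : ∀ {Θ φ ψ}, φ ∈ In Θ → ψ ∈ In Θ → fcoimpl φ ψ ∈ In Θ
  sat_bot : ∀ {Ω : Type} (M : SKModel A Ω) (w : Ω), ¬ Sat M w fbot
  sat_conj : ∀ {Ω : Type} (M : SKModel A Ω) (w : Ω) (φ ψ : F),
      Sat M w (fconj φ ψ) ↔ (Sat M w φ ∧ Sat M w ψ)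
  sat_disj : ∀ {Ω : Type} (M : SKModel A Ω) (w : Ω) (φ ψ : F),
      Sat M w (fdisj φ ψ) ↔ (Sat M w φ ∨ Sat M w ψ)
  sat_impl : ∀ {Ω : Type} (M : SKModel A Ω) (w : Ω) (φ ψ : F),
      Sat M w (fimpl φ ψ) ↔ ∀ v, M.rel w v → Sat M v φ → Sat M v ψ
  sat_coimpl : ∀ {Ω : Type} (M : SKModel A Ω) (w : Ω) (φ ψ : F),
      Sat M w (fcoimpl φ ψ) ↔ ∃ v, M.rel v w ∧ Sat M v φ ∧ ¬ Sat M v ψ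

namespace AbsLogic

variable {A : Type}

/-- The `L`-theory `(Γ,Δ)` is satisfied at `(M,w)`. -/
def SatTh (L : AbsLogic A) {Ω : Type} (M : SKModel A Ω) (w : Ω) (Γ Δ : Set L.F) : Prop :=
  (∀ φ ∈ Γ, L.Sat M w φ) ∧ (∀ φ ∈ Δ, ¬ L.Sat M w φ)

/-- `Th⁺_L(M₁,w₁) ⊆ Th⁺_L(M₂,w₂)` over the signature `Θ`. -/
def ThPosSubset (L : AbsLogic A) (Θ : Set A) {Ω₁ Ω₂ : Type} (M₁ : SKModel A Ω₁) (w₁ : Ω₁)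
    (M₂ : SKModel A Ω₂) (w₂ : Ω₂) : Prop :=
  ∀ φ ∈ L.In Θ, L.Sat M₁ w₁ φ → L.Sat M₂ w₂ φ

/-- `Th_L(M₁,w₁) = Th_L(M₂,w₂)` over the signature `Θ`. -/
def ThEq (L : AbsLogic A) (Θ : Set A) {Ω₁ Ω₂ : Type} (M₁ : SKModel A Ω₁) (w₁ : Ω₁)
    (M₂ : SKModel A Ω₂) (w₂ : Ω₂) : Prop :=
  ∀ φ ∈ L.In Θ, (L.Sat M₁ w₁ φ ↔ L.Sat M₂ w₂ φ)

/-- `L` is preserved under bi-asimulations. -/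
def Preserved (L : AbsLogic A) : Prop :=
  ∀ (Θ : Set A) (Ω₁ Ω₂ : Type) (M₁ : SKModel A Ω₁) (M₂ : SKModel A Ω₂)
    (w₁ : Ω₁) (w₂ : Ω₂) (R : Ω₁ → Ω₂ → Prop) (S : Ω₂ → Ω₁ → Prop),
    IsBiAsim Θ M₁ M₂ w₁ w₂ R S → L.ThPosSubset Θ M₁ w₁ M₂ w₂

/-- `L` is ★-compact. -/
def StarCompact (L : AbsLogic A) : Prop :=
  ∀ (Θ : Set A) (Γ Δ : Set L.F), Γ ⊆ L.In Θ → Δ ⊆ L.In Θ →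
    (∀ Γ' ⊆ Γ, ∀ Δ' ⊆ Δ, Γ'.Finite → Δ'.Finite →
      ∃ (Ω : Type) (M : SKModel A Ω) (w : Ω), w ∈ M.dom ∧ L.SatTh M w Γ' Δ') →
    ∃ (Ω : Type) (M : SKModel A Ω) (w : Ω), w ∈ M.dom ∧ L.SatTh M w Γ Δ

/-- `M ≼_L N` over the signature `Θ`. -/
def ElemSub (L : AbsLogic A) (Θ : Set A) {Ω : Type} (M N : SKModel A Ω) : Prop :=
  Submodel M N ∧ ∀ w ∈ M.dom, ∀ φ ∈ L.In Θ, (L.Sat M w φ ↔ L.Sat N w φ)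

/-- `L` has the Tarski Union Property. -/
def HasTUP (L : AbsLogic A) : Prop :=
  ∀ (Θ : Set A) (Ω : Type) (Mc : ℕ → SKModel A Ω),
    (∀ n, L.ElemSub Θ (Mc n) (Mc (n + 1))) →
    ∀ U : SKModel A Ω, IsUnionOfChain Mc U → ∀ n, L.ElemSub Θ (Mc n) U

/-- `(Γ,Δ)` is a successor `L`-type of `(M,v)` (over the signature `Θ`). -/
def SuccType (L : AbsLogic A) (Θ : Set A) {Ω : Type} (M : SKModel A Ω) (v : Ω)
    (Γ Δ : Set L.F) : Prop :=
  Γ ⊆ L.In Θ ∧ Δ ⊆ L.In Θ ∧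
    ∀ Γ' ⊆ Γ, ∀ Δ' ⊆ Δ, Γ'.Finite → Δ'.Finite →
      ∃ u, M.rel v u ∧ L.SatTh M u Γ' Δ'

/-- `(Γ,Δ)` is a predecessor `L`-type of `(M,v)` (over the signature `Θ`). -/
def PredType (L : AbsLogic A) (Θ : Set A) {Ω : Type} (M : SKModel A Ω) (v : Ω)
    (Γ Δ : Set L.F) : Prop :=
  Γ ⊆ L.In Θ ∧ Δ ⊆ L.In Θ ∧
    ∀ Γ' ⊆ Γ, ∀ Δ' ⊆ Δ, Γ'.Finite → Δ'.Finite →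
      ∃ u, M.rel u v ∧ L.SatTh M u Γ' Δ'

/-- `M` is `L`-saturated (over the signature `Θ`). -/
def Saturated (L : AbsLogic A) (Θ : Set A) {Ω : Type} (M : SKModel A Ω) : Prop :=
  ∀ v ∈ M.dom, ∀ Γ Δ : Set L.F,
    (L.SuccType Θ M v Γ Δ → ∃ u, M.rel v u ∧ L.SatTh M u Γ Δ) ∧
    (L.PredType Θ M v Γ Δ → ∃ u, M.rel u v ∧ L.SatTh M u Γ Δ)

/-- An `L`-elementary embedding of `M` into `N` (over the signature `Θ`). -/
def ElemEmbedding (L : AbsLogic A) (Θ : Set A) {Ω₁ Ω₂ : Type}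
    (M : SKModel A Ω₁) (N : SKModel A Ω₂) (f : Ω₁ → Ω₂) : Prop :=
  Set.InjOn f M.dom ∧ Set.MapsTo f M.dom N.dom ∧
  (∀ u ∈ M.dom, ∀ v ∈ M.dom, (M.rel u v ↔ N.rel (f u) (f v))) ∧
  (∀ u ∈ M.dom, ∀ φ ∈ L.In Θ, (L.Sat M u φ ↔ L.Sat N (f u) φ))

end AbsLogic

/-- An abstract bi-intuitionistic logic extending `BIL`: bi-intuitionistic
formulas are present in it in their usual form and with their usual meaning. -/
structure BILExtension (A : Type) extends AbsLogic A where
  ofBIL : BILForm A → F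
  ofBIL_mem : ∀ (Θ : Set A) (φ : BILForm A), φ.letters ⊆ Θ → ofBIL φ ∈ In Θ
  ofBIL_bot : ofBIL .bot = fbot
  ofBIL_conj : ∀ φ ψ, ofBIL (.conj φ ψ) = fconj (ofBIL φ) (ofBIL ψ)
  ofBIL_disj : ∀ φ ψ, ofBIL (.disj φ ψ) = fdisj (ofBIL φ) (ofBIL ψ)
  ofBIL_impl : ∀ φ ψ, ofBIL (.impl φ ψ) = fimpl (ofBIL φ) (ofBIL ψ)
  ofBIL_coimpl : ∀ φ ψ, ofBIL (.coimpl φ ψ) = fcoimpl (ofBIL φ) (ofBIL ψ)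
  sat_ofBIL : ∀ {Ω : Type} (M : SKModel A Ω) (w : Ω) (φ : BILForm A),
      Sat M w (ofBIL φ) ↔ BILSat M φ w

/-! ### Bi-unravellings -/

/-- The universe `W^un_w` of the bi-unravelling of `M` around `w`: finite
nonempty sequences starting at `w` whose consecutive elements are
`≺`- or `≻`-related and distinct. -/
def unravDom {A Ω : Type} (M : SKModel A Ω) (w : Ω) : Set (List Ω) :=
  {l | l ≠ [] ∧ l.head? = some w ∧ (∀ x ∈ l, x ∈ M.dom) ∧
    l.Chain' (fun u v => (M.rel u v ∨ M.rel v u) ∧ u ≠ v)}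

/-- The one-step relation `ρ^un_w` of the bi-unravelling. -/
def unravStep {A Ω : Type} (M : SKModel A Ω) (w : Ω) (s t : List Ω) : Prop :=
  s ∈ unravDom M w ∧ t ∈ unravDom M w ∧
    ((∃ x y, s.getLast? = some y ∧ t = s ++ [x] ∧ M.rel y x) ∨
     (∃ x y, t.getLast? = some y ∧ s = t ++ [x] ∧ M.rel x y))

/-- The accessibility relation `≺^un_w` of the bi-unravelling: the reflexive
and transitive closure of `ρ^un_w`. -/
def unravRel {A Ω : Type} (M : SKModel A Ω) (w : Ω) : List Ω → List Ω → Prop :=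
  Relation.ReflTransGen (unravStep M w)

/-- The valuation `V^un_w` of the bi-unravelling: a sequence satisfies a
letter iff its last element does. -/
def unravVal {A Ω : Type} (M : SKModel A Ω) (w : Ω) (p : A) : Set (List Ω) :=
  {l | l ∈ unravDom M w ∧ ∃ y, l.getLast? = some y ∧ y ∈ M.val p}

/-- `U` is (a presentation of) the bi-unravelling `M^un_w` of `M` around `w`. -/
def IsUnravelling {A Ω : Type} (M : SKModel A Ω) (w : Ω) (U : SKModel A (List Ω)) : Prop :=
  U.dom = unravDom M w ∧
  (∀ α β, U.rel α β ↔ (α ∈ unravDom M w ∧ β ∈ unravDom M w ∧ unravRel M w α β)) ∧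
  (∀ p, U.val p = unravVal M w p)

/-- `M` is a bi-unravelled model presented in the canonical form: its frame is
literally the bi-unravelling frame of `M₀` around `w₀` (the valuation of `M`
is arbitrary). -/
def IsBiUnravelledForm {A Ω : Type} (M₀ : SKModel A Ω) (w₀ : Ω)
    (M : SKModel A (List Ω)) : Prop :=
  M.dom = unravDom M₀ w₀ ∧
  (∀ α β, M.rel α β ↔ (α ∈ unravDom M₀ w₀ ∧ β ∈ unravDom M₀ w₀ ∧ unravRel M₀ w₀ α β))

/-- `(N,v)` is a bi-unravelled pointed model: its underlying frame is
isomorphic, via a point-preserving order-respecting bijection, to the frame of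
some bi-unravelling. -/
def IsBiUnravelled {A Ω' : Type} (N : SKModel A Ω') (v : Ω') : Prop :=
  ∃ (Ω₀ : Type) (M₀ : SKModel A Ω₀) (w₀ : Ω₀), w₀ ∈ M₀.dom ∧
    ∃ g : Ω' → List Ω₀, Set.InjOn g N.dom ∧ g '' N.dom = unravDom M₀ w₀ ∧ g v = [w₀] ∧
      ∀ x ∈ N.dom, ∀ y ∈ N.dom, (N.rel x y ↔ unravRel M₀ w₀ (g x) (g y))

/-- `qp` and `qm` provide the fresh letters `q⁺_α`, `q⁻_α` (for `α ∈ D`)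
used to form the signature `Θ_M`. -/
def FreshLetters {A Ω : Type} (Θ : Set A) (D : Set Ω) (qp qm : Ω → A) : Prop :=
  Set.InjOn qp D ∧ Set.InjOn qm D ∧
  (∀ α ∈ D, qp α ∉ Θ) ∧ (∀ α ∈ D, qm α ∉ Θ) ∧
  (∀ α ∈ D, ∀ β ∈ D, qp α ≠ qm β)

/-- The signature `Θ_M = Θ ∪ {q⁺_α, q⁻_α : α ∈ D}`. -/
def bracketSig {A Ω : Type} (Θ : Set A) (D : Set Ω) (qp qm : Ω → A) : Set A :=
  Θ ∪ qp '' D ∪ qm '' D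

/-- `Mb` is the model `[M]`: same frame as `M`, same valuation on `Θ`, and
`β ∈ [V](q⁺_α) ↔ α ≺ β`, `β ∉ [V](q⁻_α) ↔ β ≺ α`. -/
def IsBracket {A Ω : Type} (Θ : Set A) (qp qm : Ω → A) (M Mb : SKModel A Ω) : Prop :=
  Mb.dom = M.dom ∧ (∀ u v, Mb.rel u v ↔ M.rel u v) ∧
  (∀ p ∈ Θ, Mb.val p = M.val p) ∧
  (∀ α ∈ M.dom, Mb.val (qp α) = {β | M.rel α β}) ∧
  (∀ α ∈ M.dom, Mb.val (qm α) = {β | β ∈ M.dom ∧ ¬ M.rel β α})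

/-! ### Formula schemas -/

/-- Binary formula schemas: expressions built from two placeholders and
propositional letters by `→` and `≪`. -/
inductive BILSchema (A : Type) : Type
  | v1 : BILSchema A
  | v2 : BILSchema A
  | atom : A → BILSchema A
  | impl : BILSchema A → BILSchema A → BILSchema A
  | coimpl : BILSchema A → BILSchema A → BILSchema A

namespace BILSchema

/-- The letters occurring in a schema. -/
def letters {A : Type} : BILSchema A → Set A
  | v1 => ∅
  | v2 => ∅
  | atom p => {p}
  | impl s t => letters s ∪ letters t
  | coimpl s t => letters s ∪ letters t

/-- Evaluation of a schema in an abstract logic `L` extending `BIL`, on a pair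
of `L`-formulas. -/
def eval {A : Type} (L : BILExtension A) : BILSchema A → L.F → L.F → L.F
  | v1, α, _ => α
  | v2, _, β => β
  | atom p, _, _ => L.ofBIL (.atom p)
  | impl s t, α, β => L.fimpl (eval L s α β) (eval L t α β)
  | coimpl s t, α, β => L.fcoimpl (eval L s α β) (eval L t α β)

end BILSchema

/-- `signSat b P` says that `P` holds if the sign `b` is `+` (`true`), and
that `P` fails if the sign is `−` (`false`). -/
def signSat (b : Bool) (P : Prop) : Prop := if b then P else ¬ P

/-- Iterated conjunction, with `⋀ ∅ := ⊥ → ⊥`. -/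
def bigConj {A : Type} : List (BILForm A) → BILForm A
  | [] => .impl .bot .bot
  | φ :: l => .conj φ (bigConj l)

/-- Iterated disjunction, with `⋁ ∅ := ⊥`. -/
def bigDisj {A : Type} : List (BILForm A) → BILForm A
  | [] => .bot
  | φ :: l => .disj φ (bigDisj l)

/-- `N` realizes (over the signature `Θ`) every BIL-type of its submodel `M`. -/
def BILRealizesTypesIn {A Ω : Type} (Θ : Set A) (M N : SKModel A Ω) : Prop :=
  ∀ v ∈ M.dom, ∀ Γ Δ : Set (BILForm A),
    (BILSuccType Θ M v Γ Δ → ∃ u, N.rel v u ∧ BILSatTh N u Γ Δ) ∧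
    (BILPredType Θ M v Γ Δ → ∃ u, N.rel u v ∧ BILSatTh N u Γ Δ)

/-! Argue by contraposition: suppose every `φ ∈ L(Θ)` is preserved along inclusions of
positive BIL-theories. Let `C` be the set of BIL(Θ)-consequences of `φ`. If `(M₂,w₂)` satisfies
`C`, then `φ` together with the negations of all BIL(Θ)-formulas false at `(M₂,w₂)` is
finitely satisfiable (a finite failure would put a disjunction of such formulas into `C`),
so by ★-compactness it holds at some `(M₁,w₁)` with `Th⁺(M₁,w₁) ⊆ Th⁺(M₂,w₂)`, and
preservation gives `φ` at `(M₂,w₂)`. Thus `C` entails `φ`, and ★-compactness once more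
yields a finite part of `C` whose conjunction is equivalent to `φ`. -/

namespace BILForm

variable {A : Type}

@[simp]
theorem letters_bigConj (l : List (BILForm A)) :
    (bigConj l).letters = ⋃ ψ ∈ l, ψ.letters := by
  induction l <;> simp [bigConj, letters, *]

@[simp]
theorem letters_bigDisj (l : List (BILForm A)) :
    (bigDisj l).letters = ⋃ ψ ∈ l, ψ.letters := by
  induction l <;> simp [bigDisj, letters, *]

@[simp]
theorem bilSat_bigConj {Ω : Type} (M : SKModel A Ω) (w : Ω) (l : List (BILForm A)) :
    BILSat M (bigConj l) w ↔ ∀ ψ ∈ l, BILSat M ψ w := by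
  induction l <;> simp [bigConj, BILSat, *]

@[simp]
theorem bilSat_bigDisj {Ω : Type} (M : SKModel A Ω) (w : Ω) (l : List (BILForm A)) :
    BILSat M (bigDisj l) w ↔ ∃ ψ ∈ l, BILSat M ψ w := by
  induction l <;> simp [bigDisj, BILSat, *]

theorem exists_bilSat_iff_forall_mem {Θ : Set A} {u : Set (BILForm A)} (hu : u.Finite)
    (hΘ : ∀ ψ ∈ u, ψ.letters ⊆ Θ) :
    ∃ χ : BILForm A, χ.letters ⊆ Θ ∧
      ∀ {Ω : Type} (M : SKModel A Ω) (w : Ω), BILSat M χ w ↔ ∀ ψ ∈ u, BILSat M ψ w :=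
  ⟨bigConj hu.toFinset.toList, by simpa using hΘ, by simp⟩

theorem exists_bilSat_iff_exists_mem {Θ : Set A} {u : Set (BILForm A)} (hu : u.Finite)
    (hΘ : ∀ ψ ∈ u, ψ.letters ⊆ Θ) :
    ∃ χ : BILForm A, χ.letters ⊆ Θ ∧
      ∀ {Ω : Type} (M : SKModel A Ω) (w : Ω), BILSat M χ w ↔ ∃ ψ ∈ u, BILSat M ψ w :=
  ⟨bigDisj hu.toFinset.toList, by simpa using hΘ, by simp⟩

end BILForm

namespace AbsLogic

variable {A : Type} (L : AbsLogic A)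

def Satisfiable (Γ Δ : Set L.F) : Prop :=
  ∃ (Ω : Type) (M : SKModel A Ω) (w : Ω), w ∈ M.dom ∧ L.SatTh M w Γ Δ

variable {L}

theorem StarCompact.exists_finite_not_satisfiable (hL : L.StarCompact) {Θ : Set A}
    {Γ Δ : Set L.F} (hΓ : Γ ⊆ L.In Θ) (hΔ : Δ ⊆ L.In Θ) (h : ¬ L.Satisfiable Γ Δ) :
    ∃ Γ' ⊆ Γ, ∃ Δ' ⊆ Δ, Γ'.Finite ∧ Δ'.Finite ∧ ¬ L.Satisfiable Γ' Δ' := by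
  by_contra! hfin
  exact h (hL Θ Γ Δ hΓ hΔ hfin)

end AbsLogic

namespace BILExtension

variable {A : Type} (L : BILExtension A)

def bilConsequences (Θ : Set A) (φ : L.F) : Set (BILForm A) :=
  {ψ | ψ.letters ⊆ Θ ∧ ∀ (Ω : Type) (M : SKModel A Ω) (w : Ω), w ∈ M.dom →
    L.Sat M w φ → BILSat M ψ w}

def PreservedByThPosSubset (Θ : Set A) (φ : L.F) : Prop :=
  ∀ (Ω₁ : Type) (M₁ : SKModel A Ω₁) (w₁ : Ω₁) (Ω₂ : Type) (M₂ : SKModel A Ω₂) (w₂ : Ω₂),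
    w₁ ∈ M₁.dom → w₂ ∈ M₂.dom → BILThPosSubset Θ M₁ w₁ M₂ w₂ →
    L.Sat M₁ w₁ φ → L.Sat M₂ w₂ φ

variable {L}

theorem ofBIL_image_subset_in {Θ : Set A} {u : Set (BILForm A)}
    (hu : ∀ ψ ∈ u, ψ.letters ⊆ Θ) : L.ofBIL '' u ⊆ L.In Θ := by
  rintro _ ⟨ψ, hψ, rfl⟩
  exact L.ofBIL_mem Θ ψ (hu ψ hψ)

theorem sat_of_forall_bilConsequences (hL : L.StarCompact) {Θ : Set A} {φ : L.F}
    (hφ : φ ∈ L.In Θ) (hpres : L.PreservedByThPosSubset Θ φ) {Ω : Type} {M : SKModel A Ω}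
    {w : Ω} (hw : w ∈ M.dom) (hC : ∀ ψ ∈ L.bilConsequences Θ φ, BILSat M ψ w) :
    L.Sat M w φ := by
  set falseAt : Set (BILForm A) := {ψ | ψ.letters ⊆ Θ ∧ ¬ BILSat M ψ w}
  have hfalseAt : ∀ ψ ∈ falseAt, ψ.letters ⊆ Θ := fun ψ hψ => hψ.1
  have hsat : L.Satisfiable {φ} (L.ofBIL '' falseAt) := by
    by_contra hunsat
    obtain ⟨Γ', hΓ', Δ', hΔ', -, hΔ'fin, hΓ'Δ'⟩ := hL.exists_finite_not_satisfiable
      (Set.singleton_subset_iff.mpr hφ) (ofBIL_image_subset_in hfalseAt) hunsat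
    obtain ⟨u, hu, hufin, rfl⟩ :=
      Set.exists_subset_image_finite_and (p := (· = Δ')).mp ⟨Δ', hΔ', hΔ'fin, rfl⟩
    obtain ⟨χ, hχΘ, hχ⟩ := BILForm.exists_bilSat_iff_exists_mem hufin fun ψ hψ => (hu hψ).1
    have hχC : χ ∈ L.bilConsequences Θ φ := by
      refine ⟨hχΘ, fun Ω' M' w' hw' hφw' => ?_⟩
      by_contra hχw'
      refine hΓ'Δ' ⟨Ω', M', w', hw', fun x hx => hΓ' hx ▸ hφw', ?_⟩
      rintro _ ⟨ψ, hψ, rfl⟩ hψw'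
      exact hχw' ((hχ M' w').mpr ⟨ψ, hψ, (L.sat_ofBIL M' w' ψ).mp hψw'⟩)
    obtain ⟨ψ, hψ, hψw⟩ := (hχ M w).mp (hC χ hχC)
    exact (hu hψ).2 hψw
  obtain ⟨Ω₁, M₁, w₁, hw₁, hφw₁, hfalse₁⟩ := hsat
  have hsub : BILThPosSubset Θ M₁ w₁ M w := fun ψ hψΘ hψw₁ => by
    by_contra hψw
    exact hfalse₁ _ ⟨ψ, ⟨hψΘ, hψw⟩, rfl⟩ ((L.sat_ofBIL M₁ w₁ ψ).mpr hψw₁)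
  exact hpres Ω₁ M₁ w₁ Ω M w hw₁ hw hsub (hφw₁ φ rfl)

theorem exists_bil_equiv_of_preserved (hL : L.StarCompact) {Θ : Set A} {φ : L.F}
    (hφ : φ ∈ L.In Θ) (hpres : L.PreservedByThPosSubset Θ φ) :
    ∃ ψ : BILForm A, ψ.letters ⊆ Θ ∧
      ∀ (Ω : Type) (M : SKModel A Ω) (w : Ω), w ∈ M.dom → (L.Sat M w φ ↔ BILSat M ψ w) := by
  have hC : ∀ ψ ∈ L.bilConsequences Θ φ, ψ.letters ⊆ Θ := fun ψ hψ => hψ.1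
  have hunsat : ¬ L.Satisfiable (L.ofBIL '' L.bilConsequences Θ φ) {φ} := by
    rintro ⟨Ω, M, w, hw, hCw, hφw⟩
    exact hφw φ rfl <| sat_of_forall_bilConsequences hL hφ hpres hw fun ψ hψ =>
      (L.sat_ofBIL M w ψ).mp (hCw _ ⟨ψ, hψ, rfl⟩)
  obtain ⟨Γ', hΓ', Δ', hΔ', hΓ'fin, -, hΓ'Δ'⟩ := hL.exists_finite_not_satisfiable
    (ofBIL_image_subset_in hC) (Set.singleton_subset_iff.mpr hφ) hunsat
  obtain ⟨u, hu, hufin, rfl⟩ :=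
    Set.exists_subset_image_finite_and (p := (· = Γ')).mp ⟨Γ', hΓ', hΓ'fin, rfl⟩
  obtain ⟨χ, hχΘ, hχ⟩ := BILForm.exists_bilSat_iff_forall_mem hufin fun ψ hψ => (hu hψ).1
  refine ⟨χ, hχΘ, fun Ω M w hw => ⟨fun hφw => (hχ M w).mpr fun ψ hψ => (hu hψ).2 Ω M w hw hφw,
    fun hχw => ?_⟩⟩
  by_contra hφw
  refine hΓ'Δ' ⟨Ω, M, w, hw, ?_, fun x hx => hΔ' hx ▸ hφw⟩
  rintro _ ⟨ψ, hψ, rfl⟩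
  exact (L.sat_ofBIL M w ψ).mpr ((hχ M w).mp hχw ψ hψ)

end BILExtension

/-- Proposition 5.1. If `L` is a ★-compact abstract
bi-intuitionistic logic extending `BIL` which is not expressively equivalent
to `BIL`, then there are a signature `Θ`, a formula `φ ∈ L(Θ)` and pointed
`Θ`-models `(M₁,w₁)`, `(M₂,w₂)` with `Th⁺_BIL(M₁,w₁) ⊆ Th⁺_BIL(M₂,w₂)`,
while `φ` is true at `(M₁,w₁)` but false at `(M₂,w₂)`. -/
theorem bil_proposition1 (A : Type) (L : BILExtension A)
    (hcomp : L.toAbsLogic.StarCompact)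
    (hnequiv : ¬ ∀ (Θ : Set A) (φ : L.F), φ ∈ L.In Θ →
      ∃ ψ : BILForm A, ψ.letters ⊆ Θ ∧
        ∀ (Ω : Type) (M : SKModel A Ω) (w : Ω), w ∈ M.dom →
          (L.Sat M w φ ↔ BILSat M ψ w)) :
    ∃ (Θ : Set A) (φ : L.F), φ ∈ L.In Θ ∧
      ∃ (Ω₁ : Type) (M₁ : SKModel A Ω₁) (w₁ : Ω₁)
        (Ω₂ : Type) (M₂ : SKModel A Ω₂) (w₂ : Ω₂),
        w₁ ∈ M₁.dom ∧ w₂ ∈ M₂.dom ∧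
        BILThPosSubset Θ M₁ w₁ M₂ w₂ ∧
        L.Sat M₁ w₁ φ ∧ ¬ L.Sat M₂ w₂ φ := by
  by_contra! hpres
  exact hnequiv fun Θ φ hφ => BILExtension.exists_bil_equiv_of_preserved hcomp hφ (hpres Θ φ hφ)
end

section
/- Let L be an abstract bi-intuitionistic logic extending BIL which is preserved under bi-asimulations, let (M,w) be a pointed bi-unravelled Θ-model, and let (N,v) be a pointed Θ_M-model with Th_L(N,v) = Th_L([M],w). Then there exists an L-elementary embedding f of [M] into N with f(w) = v. -/
/-! In `[M]` each world `α` is the only one satisfying `q⁺_α` and refuting `q⁻_α`. So if `u` has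
the theory of `α` in `N` and `α ≺ β`, then `u` refutes `q⁺_β → q⁻_β`, and any witness `u' ≻ u`
has the theory of `β`: for each `φ`, the theory of `α` decides between `(q⁺_β ∧ φ) → q⁻_β` and
`q⁺_β → (q⁻_β ∨ φ)`. Dually, `≪` yields predecessors when `β ≺ α`. The worlds of a bi-unravelling
form a tree of paths, one step at a time away from `[w₀]`, so these choices assemble into a map
`f` with `f [w₀] = v` that preserves theories and `≺`; it reflects `≺` (hence is injective)
because `q⁺_α` holds exactly above `α`. -/

theorem SKModel.rel_of_reflTransGen {A Ω : Type} (K : SKModel A Ω) {x y : Ω} (hx : x ∈ K.dom)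
    (h : Relation.ReflTransGen K.rel x y) : K.rel x y := by
  induction h with
  | refl => exact K.rel_refl x hx
  | tail _ hyz ih => exact K.rel_trans ih hyz

section Unravelling

variable {A Ω : Type} {M : SKModel A Ω} {w : Ω}

theorem eq_of_singleton_mem_unravDom {x : Ω} (h : [x] ∈ unravDom M w) : x = w := by
  simpa using h.2.1

theorem mem_unravDom_of_append_singleton {α : List Ω} {x : Ω} (h : α ++ [x] ∈ unravDom M w)
    (hα : α ≠ []) : α ∈ unravDom M w := by
  obtain ⟨-, hhead, hmem, hchain⟩ := h
  refine ⟨hα, ?_, fun z hz => hmem z (by simp [hz]), (List.isChain_append.mp hchain).1⟩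
  rwa [List.head?_append_of_ne_nil _ hα] at hhead

theorem unravStep_append_singleton_xor {α : List Ω} {x : Ω} (hα : α ∈ unravDom M w)
    (hαx : α ++ [x] ∈ unravDom M w) :
    Xor (unravStep M w α (α ++ [x])) (unravStep M w (α ++ [x]) α) := by
  obtain ⟨y, hy⟩ : ∃ y, α.getLast? = some y :=
    Option.isSome_iff_exists.mp (List.getLast?_isSome.mpr hα.1)
  obtain ⟨hcomp, hne⟩ : (M.rel y x ∨ M.rel x y) ∧ y ≠ x :=
    (List.isChain_append.mp hαx.2.2.2).2.2 y hy x rfl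
  have hup : unravStep M w α (α ++ [x]) ↔ M.rel y x := by
    simp [unravStep, hα, hαx, hy]
  have hdown : unravStep M w (α ++ [x]) α ↔ M.rel x y := by
    simp [unravStep, hα, hαx, hy]
  rw [hup, hdown]
  rcases hcomp with h | h
  · exact Or.inl ⟨h, fun h' => hne (M.rel_antisymm h h')⟩
  · exact Or.inr ⟨h, fun h' => hne (M.rel_antisymm h' h)⟩

theorem IsBiUnravelledForm.rel_of_unravStep {M' : SKModel A (List Ω)}
    (hM : IsBiUnravelledForm M w M') {α β : List Ω} (h : unravStep M w α β) : M'.rel α β :=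
  (hM.2 α β).2 ⟨h.1, h.2.1, .single h⟩

end Unravelling

/-- Sequences are read reversed, so that extending one at its end is structural recursion. -/
def liftReversedPath {Ω Ω' : Type} (v : Ω') (step : Ω' → List Ω → Ω → Ω') : List Ω → Ω'
  | [] => v
  | [_] => v
  | x :: y :: ρ => step (liftReversedPath v step (y :: ρ)) (y :: ρ).reverse x

theorem liftReversedPath_reverse_append_singleton {Ω Ω' : Type} {v : Ω'}
    {step : Ω' → List Ω → Ω → Ω'} {α : List Ω} (x : Ω) (hα : α ≠ []) :
    liftReversedPath v step (α ++ [x]).reverse = step (liftReversedPath v step α.reverse) α x := by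
  obtain ⟨y, ρ, h⟩ := List.exists_cons_of_ne_nil (List.reverse_ne_nil_iff.mpr hα)
  rw [List.reverse_append, List.reverse_singleton, List.singleton_append, h, liftReversedPath, ← h,
    List.reverse_reverse]

theorem exists_map_unravDom {A Ω Ω' : Type} (M : SKModel A Ω) (w : Ω)
    (I : List Ω → Ω' → Prop) (r : Ω' → Ω' → Prop) {v : Ω'} (hv : I [w] v)
    (hup : ∀ α β u, I α u → unravStep M w α β → ∃ u', I β u' ∧ r u u')
    (hdown : ∀ α β u, I α u → unravStep M w β α → ∃ u', I β u' ∧ r u' u) :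
    ∃ f : List Ω → Ω', f [w] = v ∧ (∀ α ∈ unravDom M w, I α (f α)) ∧
      ∀ α β, unravStep M w α β → r (f α) (f β) := by
  have hext : ∀ u α x, ∃ u', α ∈ unravDom M w → α ++ [x] ∈ unravDom M w → I α u →
      I (α ++ [x]) u' ∧ (unravStep M w α (α ++ [x]) → r u u') ∧
        (unravStep M w (α ++ [x]) α → r u' u) := by
    intro u α x
    by_cases h : α ∈ unravDom M w ∧ α ++ [x] ∈ unravDom M w ∧ I α u
    · obtain ⟨hα, hαx, hu⟩ := h
      rcases unravStep_append_singleton_xor hα hαx with ⟨hs, hns⟩ | ⟨hs, hns⟩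
      · obtain ⟨u', hu', hr⟩ := hup _ _ _ hu hs
        exact ⟨u', fun _ _ _ => ⟨hu', fun _ => hr, fun h => absurd h hns⟩⟩
      · obtain ⟨u', hu', hr⟩ := hdown _ _ _ hu hs
        exact ⟨u', fun _ _ _ => ⟨hu', fun h => absurd h hns, fun _ => hr⟩⟩
    · exact ⟨v, fun hα hαx hu => absurd ⟨hα, hαx, hu⟩ h⟩
  choose step hstep using hext
  set f := fun α : List Ω => liftReversedPath v step α.reverse
  have hf : ∀ α x, α ≠ [] → f (α ++ [x]) = step (f α) α x :=
    fun _ x hα => liftReversedPath_reverse_append_singleton x hα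
  have hInv : ∀ α ∈ unravDom M w, I α (f α) := by
    intro α
    induction α using List.reverseRecOn with
    | nil => exact fun h => absurd rfl h.1
    | append_singleton α x ih =>
      intro hαx
      by_cases hα : α = []
      · subst hα
        obtain rfl := eq_of_singleton_mem_unravDom hαx
        exact hv
      · have hα' := mem_unravDom_of_append_singleton hαx hα
        rw [hf α x hα]
        exact (hstep _ _ _ hα' hαx (ih hα')).1
  refine ⟨f, rfl, hInv, fun α β hαβ => ?_⟩
  obtain ⟨hα, hβ, ⟨x, -, -, rfl, -⟩ | ⟨x, -, -, rfl, -⟩⟩ := id hαβ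
  · rw [hf α x hα.1]
    exact (hstep _ _ _ hα hβ (hInv α hα)).2.1 hαβ
  · rw [hf β x hβ.1]
    exact (hstep _ _ _ hβ hα (hInv β hβ)).2.2 hαβ

namespace AbsLogic

variable {A : Type} (L : AbsLogic A) {Θ : Set A} {Ω₁ Ω₂ : Type} {K : SKModel A Ω₁}
  {N : SKModel A Ω₂}

theorem exists_succ_thEq {a b : Ω₁} {u : Ω₂} {P Q : L.F} (hP : P ∈ L.In Θ)
    (hQ : Q ∈ L.In Θ) (hname : ∀ c, L.Sat K c P ∧ ¬ L.Sat K c Q ↔ c = b)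
    (hu : L.ThEq Θ N u K a) (hab : K.rel a b) :
    ∃ u', N.rel u u' ∧ L.ThEq Θ N u' K b := by
  have hb := (hname b).2 rfl
  obtain ⟨u', huu', hPu', hQu'⟩ : ∃ u', N.rel u u' ∧ L.Sat N u' P ∧ ¬ L.Sat N u' Q := by
    have h : ¬ L.Sat K a (L.fimpl P Q) := fun h => hb.2 ((L.sat_impl _ _ _ _).1 h b hab hb.1)
    rw [← hu _ (L.mem_impl hP hQ), L.sat_impl] at h
    simpa only [not_forall, Classical.not_imp, exists_prop] using h
  refine ⟨u', huu', fun φ hφ => ⟨fun hφu' => ?_, fun hφb => ?_⟩⟩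
  · by_contra hφb
    have h : L.Sat K a (L.fimpl (L.fconj P φ) Q) := by
      refine (L.sat_impl _ _ _ _).2 fun c _ hc => ?_
      rw [L.sat_conj] at hc
      by_contra hQc
      exact hφb ((hname c).1 ⟨hc.1, hQc⟩ ▸ hc.2)
    rw [← hu _ (L.mem_impl (L.mem_conj hP hφ) hQ), L.sat_impl] at h
    exact hQu' (h u' huu' ((L.sat_conj _ _ _ _).2 ⟨hPu', hφu'⟩))
  · have h : L.Sat K a (L.fimpl P (L.fdisj Q φ)) := by
      refine (L.sat_impl _ _ _ _).2 fun c _ hPc => (L.sat_disj _ _ _ _).2 ?_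
      by_cases hQc : L.Sat K c Q
      · exact Or.inl hQc
      · exact Or.inr ((hname c).1 ⟨hPc, hQc⟩ ▸ hφb)
    rw [← hu _ (L.mem_impl hP (L.mem_disj hQ hφ)), L.sat_impl] at h
    exact ((L.sat_disj _ _ _ _).1 (h u' huu' hPu')).resolve_left hQu'

theorem exists_pred_thEq {a b : Ω₁} {u : Ω₂} {P Q : L.F} (hP : P ∈ L.In Θ)
    (hQ : Q ∈ L.In Θ) (hname : ∀ c, L.Sat K c P ∧ ¬ L.Sat K c Q ↔ c = b)
    (hu : L.ThEq Θ N u K a) (hba : K.rel b a) :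
    ∃ u', N.rel u' u ∧ L.ThEq Θ N u' K b := by
  have hb := (hname b).2 rfl
  obtain ⟨u', hu'u, hPu', hQu'⟩ : ∃ u', N.rel u' u ∧ L.Sat N u' P ∧ ¬ L.Sat N u' Q := by
    have h : L.Sat K a (L.fcoimpl P Q) := (L.sat_coimpl _ _ _ _).2 ⟨b, hba, hb⟩
    rwa [← hu _ (L.mem_coimpl hP hQ), L.sat_coimpl] at h
  refine ⟨u', hu'u, fun φ hφ => ⟨fun hφu' => ?_, fun hφb => ?_⟩⟩
  · by_contra hφb
    have h : ¬ L.Sat K a (L.fcoimpl (L.fconj P φ) Q) := by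
      rw [L.sat_coimpl]
      rintro ⟨c, -, hc, hQc⟩
      rw [L.sat_conj] at hc
      exact hφb ((hname c).1 ⟨hc.1, hQc⟩ ▸ hc.2)
    rw [← hu _ (L.mem_coimpl (L.mem_conj hP hφ) hQ), L.sat_coimpl] at h
    exact h ⟨u', hu'u, (L.sat_conj _ _ _ _).2 ⟨hPu', hφu'⟩, hQu'⟩
  · have h : ¬ L.Sat K a (L.fcoimpl P (L.fdisj Q φ)) := by
      rw [L.sat_coimpl]
      rintro ⟨c, -, hPc, hc⟩
      rw [L.sat_disj, not_or] at hc
      exact hc.2 ((hname c).1 ⟨hPc, hc.1⟩ ▸ hφb)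
    rw [← hu _ (L.mem_coimpl hP (L.mem_disj hQ hφ)), L.sat_coimpl] at h
    by_contra hφu'
    exact h ⟨u', hu'u, hPu', fun hd => ((L.sat_disj _ _ _ _).1 hd).elim hQu' hφu'⟩

theorem elemEmbedding_of_thEq {f : Ω₁ → Ω₂} (hmaps : Set.MapsTo f K.dom N.dom)
    (hth : ∀ a ∈ K.dom, L.ThEq Θ N (f a) K a)
    (hrel : ∀ a ∈ K.dom, ∀ b ∈ K.dom, K.rel a b ↔ N.rel (f a) (f b)) :
    L.ElemEmbedding Θ K N f := by
  refine ⟨fun a ha b hb hab => ?_, hmaps, hrel, fun a ha φ hφ => (hth a ha φ hφ).symm⟩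
  have hrefl : N.rel (f a) (f b) := hab ▸ N.rel_refl _ (hmaps ha)
  exact K.rel_antisymm ((hrel a ha b hb).2 hrefl) ((hrel b hb a ha).2 (hab ▸ hrefl))

end AbsLogic

namespace BILExtension

variable {A : Type} (L : BILExtension A)

theorem sat_ofBIL_atom {Ω : Type} (K : SKModel A Ω) (u : Ω) (p : A) :
    L.Sat K u (L.ofBIL (.atom p)) ↔ u ∈ K.val p :=
  L.sat_ofBIL K u (.atom p)

theorem ofBIL_atom_mem {Θ : Set A} {p : A} (hp : p ∈ Θ) : L.ofBIL (.atom p) ∈ L.In Θ :=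
  L.ofBIL_mem Θ _ (Set.singleton_subset_iff.mpr hp)

end BILExtension

section Bracket

variable {A Ω Ω' : Type} {Θ : Set A} {qp qm : Ω → A}

theorem qp_mem_bracketSig {D : Set Ω} {β : Ω} (hβ : β ∈ D) : qp β ∈ bracketSig Θ D qp qm :=
  Or.inl (Or.inr ⟨β, hβ, rfl⟩)

theorem qm_mem_bracketSig {D : Set Ω} {β : Ω} (hβ : β ∈ D) : qm β ∈ bracketSig Θ D qp qm :=
  Or.inr ⟨β, hβ, rfl⟩

namespace IsBracket

variable {M Mb : SKModel A Ω}

theorem mem_qp_and_not_mem_qm_iff (hMb : IsBracket Θ qp qm M Mb) {β : Ω} (hβ : β ∈ M.dom)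
    (γ : Ω) :
    γ ∈ Mb.val (qp β) ∧ γ ∉ Mb.val (qm β) ↔ γ = β := by
  rw [hMb.2.2.2.1 β hβ, hMb.2.2.2.2 β hβ]
  constructor
  · rintro ⟨hβγ, hγ⟩
    exact M.rel_antisymm (by_contra fun h => hγ ⟨(M.rel_mem hβγ).2, h⟩) hβγ
  · rintro rfl
    exact ⟨M.rel_refl γ hβ, fun h => h.2 (M.rel_refl γ hβ)⟩

variable (L : BILExtension A) {N : SKModel A Ω'} {α β : Ω} {u : Ω'}

theorem sat_qp_and_not_qm_iff (hMb : IsBracket Θ qp qm M Mb) (hβ : β ∈ M.dom) (γ : Ω) :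
    L.Sat Mb γ (L.ofBIL (.atom (qp β))) ∧ ¬ L.Sat Mb γ (L.ofBIL (.atom (qm β))) ↔ γ = β := by
  simp only [L.sat_ofBIL_atom]
  exact hMb.mem_qp_and_not_mem_qm_iff hβ γ

theorem exists_succ_thEq (hMb : IsBracket Θ qp qm M Mb)
    (hu : L.ThEq (bracketSig Θ M.dom qp qm) N u Mb α)
    (hαβ : Mb.rel α β) : ∃ u', N.rel u u' ∧ L.ThEq (bracketSig Θ M.dom qp qm) N u' Mb β := by
  have hβ : β ∈ M.dom := hMb.1 ▸ (Mb.rel_mem hαβ).2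
  exact L.exists_succ_thEq (L.ofBIL_atom_mem (qp_mem_bracketSig hβ))
    (L.ofBIL_atom_mem (qm_mem_bracketSig hβ)) (hMb.sat_qp_and_not_qm_iff L hβ) hu hαβ

theorem exists_pred_thEq (hMb : IsBracket Θ qp qm M Mb)
    (hu : L.ThEq (bracketSig Θ M.dom qp qm) N u Mb α)
    (hβα : Mb.rel β α) : ∃ u', N.rel u' u ∧ L.ThEq (bracketSig Θ M.dom qp qm) N u' Mb β := by
  have hβ : β ∈ M.dom := hMb.1 ▸ (Mb.rel_mem hβα).1
  exact L.exists_pred_thEq (L.ofBIL_atom_mem (qp_mem_bracketSig hβ))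
    (L.ofBIL_atom_mem (qm_mem_bracketSig hβ)) (hMb.sat_qp_and_not_qm_iff L hβ) hu hβα

theorem rel_of_rel_of_thEq (hMb : IsBracket Θ qp qm M Mb) {uα uβ : Ω'} (hα : α ∈ M.dom)
    (huα : L.ThEq (bracketSig Θ M.dom qp qm) N uα Mb α)
    (huβ : L.ThEq (bracketSig Θ M.dom qp qm) N uβ Mb β) (h : N.rel uα uβ) : Mb.rel α β := by
  have hq : L.ofBIL (.atom (qp α)) ∈ L.In (bracketSig Θ M.dom qp qm) :=
    L.ofBIL_atom_mem (qp_mem_bracketSig hα)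
  have hαq : α ∈ Mb.val (qp α) := ((hMb.mem_qp_and_not_mem_qm_iff hα α).2 rfl).1
  have huαq : uα ∈ N.val (qp α) :=
    (L.sat_ofBIL_atom _ _ _).1 ((huα _ hq).2 ((L.sat_ofBIL_atom _ _ _).2 hαq))
  have hβq : β ∈ Mb.val (qp α) := (L.sat_ofBIL_atom _ _ _).1
    ((huβ _ hq).1 ((L.sat_ofBIL_atom _ _ _).2 (N.val_mono _ h huαq)))
  rw [hMb.2.2.2.1 α hα] at hβq
  exact (hMb.2.1 α β).2 hβq

end IsBracket

end Bracket

theorem bil_embedding_lemma_general (A : Type) (L : BILExtension A)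
    (Θ : Set A) (Ω₀ : Type) (M₀ : SKModel A Ω₀) (w₀ : Ω₀)
    (M : SKModel A (List Ω₀)) (hM : IsBiUnravelledForm M₀ w₀ M)
    (qp qm : List Ω₀ → A)
    (Mb : SKModel A (List Ω₀)) (hMb : IsBracket Θ qp qm M Mb)
    (Ω' : Type) (N : SKModel A Ω') (v : Ω') (hv : v ∈ N.dom)
    (hth : ∀ φ ∈ L.In (bracketSig Θ M.dom qp qm),
      (L.Sat N v φ ↔ L.Sat Mb [w₀] φ)) :
    ∃ f : List Ω₀ → Ω',
      L.toAbsLogic.ElemEmbedding (bracketSig Θ M.dom qp qm) Mb N f ∧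
      f [w₀] = v := by
  have hdom : Mb.dom = unravDom M₀ w₀ := hMb.1.trans hM.1
  have hstep : ∀ {α β}, unravStep M₀ w₀ α β → Mb.rel α β :=
    fun h => (hMb.2.1 _ _).2 (hM.rel_of_unravStep h)
  obtain ⟨f, hfw₀, hf, hfstep⟩ := exists_map_unravDom M₀ w₀
    (fun α u => u ∈ N.dom ∧ L.ThEq (bracketSig Θ M.dom qp qm) N u Mb α) N.rel ⟨hv, hth⟩
    (fun _ _ _ ⟨_, hu⟩ h =>
      let ⟨u', huu', hu'⟩ := hMb.exists_succ_thEq L hu (hstep h)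
      ⟨u', ⟨(N.rel_mem huu').2, hu'⟩, huu'⟩)
    (fun _ _ _ ⟨_, hu⟩ h =>
      let ⟨u', hu'u, hu'⟩ := hMb.exists_pred_thEq L hu (hstep h)
      ⟨u', ⟨(N.rel_mem hu'u).1, hu'⟩, hu'u⟩)
  refine ⟨f, L.elemEmbedding_of_thEq (fun α hα => (hf α (hdom ▸ hα)).1)
    (fun α hα => (hf α (hdom ▸ hα)).2) fun α hα β hβ => ⟨fun h => ?_, ?_⟩, hfw₀⟩
  · have hαβ : unravRel M₀ w₀ α β := ((hM.2 α β).1 ((hMb.2.1 α β).1 h)).2.2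
    exact N.rel_of_reflTransGen (hf α (hdom ▸ hα)).1 (hαβ.lift f hfstep)
  · exact hMb.rel_of_rel_of_thEq L (hMb.1 ▸ hα) (hf α (hdom ▸ hα)).2 (hf β (hdom ▸ hβ)).2

/-- Lemma 5.2. Let `L` be an abstract bi-intuitionistic
logic extending `BIL` preserved under bi-asimulations, let `(M,[w₀])` be a
pointed bi-unravelled `Θ`-model (given in canonical form as the bi-unravelling
frame of `(M₀,w₀)`), and let `(N,v)` be a pointed `Θ_M`-model with
`Th_L(N,v) = Th_L([M],[w₀])`. Then there is an `L`-elementary embedding `f`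
of `[M]` into `N` with `f([w₀]) = v`. -/
theorem bil_embedding_lemma (A : Type) (L : BILExtension A)
    (hpres : L.toAbsLogic.Preserved)
    (Θ : Set A) (Ω₀ : Type) (M₀ : SKModel A Ω₀) (w₀ : Ω₀) (hw₀ : w₀ ∈ M₀.dom)
    (M : SKModel A (List Ω₀)) (hM : IsBiUnravelledForm M₀ w₀ M)
    (qp qm : List Ω₀ → A) (hfresh : FreshLetters Θ M.dom qp qm)
    (Mb : SKModel A (List Ω₀)) (hMb : IsBracket Θ qp qm M Mb)
    (Ω' : Type) (N : SKModel A Ω') (v : Ω') (hv : v ∈ N.dom)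
    (hth : ∀ φ ∈ L.In (bracketSig Θ M.dom qp qm),
      (L.Sat N v φ ↔ L.Sat Mb [w₀] φ)) :
    ∃ f : List Ω₀ → Ω',
      L.toAbsLogic.ElemEmbedding (bracketSig Θ M.dom qp qm) Mb N f ∧
      f [w₀] = v :=
  bil_embedding_lemma_general A L Θ Ω₀ M₀ w₀ M hM qp qm Mb hMb Ω' N v hv hth
end

section
/- Let L be an abstract bi-intuitionistic logic extending BIL which is preserved under bi-asimulations, is ★-compact, and has the TUP, and let (M,w) be a pointed bi-unravelled Θ-model. Then for every n > 0, every w̄ₙ = (w₁,…,wₙ) ∈ W^un_w and every 1 ≤ k ≤ n there exist binary formula schemas φ^k_{w̄ₙ}, ψ^k_{w̄ₙ}, θ^k_{w̄ₙ}, τ^k_{w̄ₙ} of BIL(Θ_M) and signs F(χ) ∈ {+,−} such that for every signature Σ ⊇ Θ_M, every Σ-expansion M' of [M], and all α, β ∈ L(Σ), writing w̄ₖ = (w₁,…,wₖ): (1) if F(φ^k_{w̄ₙ}) = + then M',w̄ₖ ⊨_L φ^k_{w̄ₙ}(α,β) iff M',w̄ₙ ⊭_L α→β, and if F(φ^k_{w̄ₙ})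 = − then M',w̄ₖ ⊭_L φ^k_{w̄ₙ}(α,β) iff M',w̄ₙ ⊭_L α→β; (2) analogously, the condition for ψ^k_{w̄ₙ} holds iff M',w̄ₙ ⊨_L α≪β; (3) the condition for θ^k_{w̄ₙ} holds iff M',w̄ₙ ⊨_L α→β; (4) the condition for τ^k_{w̄ₙ} holds iff M',w̄ₙ ⊭_L α≪β. -/
/-! If the letters `p`, `q` name a world `c` (`p` true exactly above `c`, `q` false exactly
below `c`), then `f → q` can fail above `c` only at `c` itself, where it fails iff `f` holds.
Hence at a predecessor of `c` the formula `p → (s → q)` fails iff `s` holds at `c`, and at a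
successor of `c` the formula `p ≪ (s → q)` holds iff `s` holds at `c`. Consecutive prefixes
`w̄ₘ`, `w̄ₘ₊₁` of a sequence of the unravelling are comparable, so wrapping `α → β` and
`α ≪ β` once per prefix, with the letters `q⁺`, `q⁻` of `w̄ₘ₊₁`, carries the four conditions
from `w̄ₙ` down to `w̄ₖ`; the sign flips at each step down to a predecessor. -/

/-- The letters `p` and `q` name the world `c`, as `q⁺_c` and `q⁻_c` do in `[M]`. -/
def SKModel.IsNominalPair {A Ω : Type} (N : SKModel A Ω) (c : Ω) (p q : A) : Prop :=
  N.val p = {v | N.rel c v} ∧ N.val q = {v | v ∈ N.dom ∧ ¬ N.rel v c}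

lemma signSat_not (b : Bool) (P : Prop) : signSat (!b) P ↔ signSat b (¬ P) := by
  cases b <;> simp [signSat]

lemma signSat_congr (b : Bool) {P Q : Prop} (h : P ↔ Q) : signSat b P ↔ signSat b Q := by
  rw [h]

namespace BILSchema

variable {A : Type}

def viaSucc (p q : A) (s : BILSchema A) : BILSchema A :=
  .impl (.atom p) (.impl s (.atom q))

def viaPred (p q : A) (s : BILSchema A) : BILSchema A :=
  .coimpl (.atom p) (.impl s (.atom q))

end BILSchema

namespace SKModel.IsNominalPair

open BILSchema

variable {A Ω : Type} {N : SKModel A Ω} {c : Ω} {p q : A}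

lemma of_isExpansion {Sig : Set A} (h : N.IsNominalPair c p q) (hp : p ∈ Sig) (hq : q ∈ Sig)
    {N' : SKModel A Ω} (hN' : IsExpansion Sig N N') : N'.IsNominalPair c p q := by
  obtain ⟨hdom, hrel, hval⟩ := hN'
  simp only [SKModel.IsNominalPair, hval p hp, hval q hq, hdom, hrel]
  exact h

variable (L : BILExtension A)

lemma sat_atom_fst (h : N.IsNominalPair c p q) (v : Ω) :
    L.Sat N v (L.ofBIL (.atom p)) ↔ N.rel c v := by
  rw [L.sat_ofBIL, BILSat, h.1, Set.mem_ofPred_eq]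

lemma sat_atom_snd (h : N.IsNominalPair c p q) (v : Ω) :
    L.Sat N v (L.ofBIL (.atom q)) ↔ v ∈ N.dom ∧ ¬ N.rel v c := by
  rw [L.sat_ofBIL, BILSat, h.2, Set.mem_ofPred_eq]

lemma not_sat_impl_iff (h : N.IsNominalPair c p q) {v : Ω} (hcv : N.rel c v) (f : L.F) :
    ¬ L.Sat N v (L.fimpl f (L.ofBIL (.atom q))) ↔ v = c ∧ L.Sat N c f := by
  simp only [L.sat_impl, h.sat_atom_snd L, not_forall, not_and, not_not, exists_prop]
  constructor
  · rintro ⟨u, hvu, hfu, hbelow⟩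
    have huc : u = c := N.rel_antisymm (hbelow (N.rel_mem hvu).2) (N.rel_trans hcv hvu)
    subst huc
    exact ⟨N.rel_antisymm hvu hcv, hfu⟩
  · rintro ⟨rfl, hf⟩
    exact ⟨v, N.rel_refl v (N.rel_mem hcv).1, hf, fun hv => N.rel_refl v hv⟩

lemma sat_viaSucc_iff (h : N.IsNominalPair c p q) {x : Ω} (hxc : N.rel x c)
    (s : BILSchema A) (α β : L.F) :
    L.Sat N x ((viaSucc p q s).eval L α β) ↔ ¬ L.Sat N c (s.eval L α β) := by
  have hc := N.rel_refl c (N.rel_mem hxc).2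
  rw [viaSucc, eval, L.sat_impl, iff_not_comm]
  simp only [eval, h.sat_atom_fst L, not_forall, exists_prop]
  constructor
  · intro hs
    exact ⟨c, hxc, hc, (h.not_sat_impl_iff L hc _).2 ⟨rfl, hs⟩⟩
  · rintro ⟨v, -, hcv, hv⟩
    exact ((h.not_sat_impl_iff L hcv _).1 hv).2

lemma sat_viaPred_iff (h : N.IsNominalPair c p q) {x : Ω} (hcx : N.rel c x)
    (s : BILSchema A) (α β : L.F) :
    L.Sat N x ((viaPred p q s).eval L α β) ↔ L.Sat N c (s.eval L α β) := by
  have hc := N.rel_refl c (N.rel_mem hcx).1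
  rw [viaPred, eval, L.sat_coimpl]
  simp only [eval, h.sat_atom_fst L]
  constructor
  · rintro ⟨v, -, hcv, hv⟩
    exact ((h.not_sat_impl_iff L hcv _).1 hv).2
  · intro hs
    exact ⟨c, hcx, hc, (h.not_sat_impl_iff L hc _).2 ⟨rfl, hs⟩⟩

end SKModel.IsNominalPair

def SchemaTransfers {A Ω : Type} (L : BILExtension A) (Sig : Set A) (N : SKModel A Ω)
    (x y : Ω) : Prop :=
  ∀ (t : BILSchema A) (bt : Bool), t.letters ⊆ Sig →
    ∃ (s : BILSchema A) (b : Bool), s.letters ⊆ Sig ∧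
      ∀ N' : SKModel A Ω, IsExpansion Sig N N' → ∀ α β : L.F,
        (signSat b (L.Sat N' x (s.eval L α β)) ↔ signSat bt (L.Sat N' y (t.eval L α β)))

namespace SchemaTransfers

variable {A Ω : Type} {L : BILExtension A} {Sig : Set A} {N : SKModel A Ω}

lemma refl (x : Ω) : SchemaTransfers L Sig N x x :=
  fun t bt ht => ⟨t, bt, ht, fun _ _ _ _ => Iff.rfl⟩

lemma trans {x y z : Ω} (hxy : SchemaTransfers L Sig N x y)
    (hyz : SchemaTransfers L Sig N y z) : SchemaTransfers L Sig N x z := by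
  intro t bt ht
  obtain ⟨s, b, hs, hst⟩ := hyz t bt ht
  obtain ⟨r, b', hr, hrs⟩ := hxy s b hs
  exact ⟨r, b', hr, fun N' hN' α β => (hrs N' hN' α β).trans (hst N' hN' α β)⟩

lemma of_isNominalPair {c x : Ω} {p q : A} (hp : p ∈ Sig) (hq : q ∈ Sig)
    (h : N.IsNominalPair c p q) (hxc : N.rel x c ∨ N.rel c x) :
    SchemaTransfers L Sig N x c := by
  intro t bt ht
  have hletters : {p} ∪ (t.letters ∪ {q}) ⊆ Sig := by
    simp only [Set.union_subset_iff, Set.singleton_subset_iff]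
    exact ⟨hp, ht, hq⟩
  rcases hxc with hxc | hcx
  · refine ⟨t.viaSucc p q, !bt, hletters, fun N' hN' α β => ?_⟩
    have hxc' : N'.rel x c := (hN'.2.1 x c).2 hxc
    refine (signSat_not _ _).trans (signSat_congr _ ?_)
    rw [(h.of_isExpansion hp hq hN').sat_viaSucc_iff L hxc' t α β, not_not]
  · refine ⟨t.viaPred p q, bt, hletters, fun N' hN' α β => ?_⟩
    have hcx' : N'.rel c x := (hN'.2.1 c x).2 hcx
    exact signSat_congr _ ((h.of_isExpansion hp hq hN').sat_viaPred_iff L hcx' t α β)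

end SchemaTransfers

lemma IsBracket.isNominalPair {A Ω : Type} {Θ : Set A} {qp qm : Ω → A} {M Mb : SKModel A Ω}
    (hMb : IsBracket Θ qp qm M Mb) {c : Ω} (hc : c ∈ M.dom) :
    Mb.IsNominalPair c (qp c) (qm c) := by
  obtain ⟨hdom, hrel, -, hqp, hqm⟩ := hMb
  simp only [SKModel.IsNominalPair, hdom, hrel]
  exact ⟨hqp c hc, hqm c hc⟩

section Unravelling

variable {A Ω : Type} {M₀ : SKModel A Ω} {w₀ : Ω} {l : List Ω}

lemma take_mem_unravDom (hl : l ∈ unravDom M₀ w₀) {k : ℕ} (hk : 1 ≤ k) :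
    l.take k ∈ unravDom M₀ w₀ := by
  obtain ⟨hne, hhd, hmem, hch⟩ := hl
  obtain ⟨a, t, rfl⟩ := List.exists_cons_of_ne_nil hne
  obtain ⟨k, rfl⟩ := Nat.exists_eq_add_of_le' hk
  exact ⟨by simp, by simpa using hhd, fun x hx => hmem x (List.mem_of_mem_take hx), hch.take _⟩

lemma unravStep_take_succ_or (hl : l ∈ unravDom M₀ w₀) {k : ℕ} (hk : 1 ≤ k)
    (hkl : k < l.length) :
    unravStep M₀ w₀ (l.take k) (l.take (k + 1)) ∨
      unravStep M₀ w₀ (l.take (k + 1)) (l.take k) := by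
  have hlast : (l.take k).getLast? = some l[k - 1] := by
    rw [List.getLast?_eq_getElem?, List.length_take, Nat.min_eq_left hkl.le,
      List.getElem?_take_of_lt (by omega), List.getElem?_eq_getElem]
  have happ : l.take (k + 1) = l.take k ++ [l[k]] := List.take_succ_eq_append_getElem hkl
  have hadj := (List.isChain_iff_getElem.mp hl.2.2.2 (k - 1) (by omega)).1
  simp only [Nat.sub_add_cancel hk] at hadj
  have h₁ := take_mem_unravDom hl hk
  have h₂ := take_mem_unravDom hl (by omega : 1 ≤ k + 1)
  rcases hadj with h | h
  · exact Or.inl ⟨h₁, h₂, Or.inl ⟨_, _, hlast, happ, h⟩⟩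
  · exact Or.inr ⟨h₂, h₁, Or.inr ⟨_, _, hlast, happ, h⟩⟩

lemma IsBiUnravelledForm.rel_take_succ_or {M : SKModel A (List Ω)}
    (hM : IsBiUnravelledForm M₀ w₀ M) (hl : l ∈ M.dom) {k : ℕ} (hk : 1 ≤ k)
    (hkl : k < l.length) :
    M.rel (l.take k) (l.take (k + 1)) ∨ M.rel (l.take (k + 1)) (l.take k) := by
  rw [hM.1] at hl
  have h₁ := take_mem_unravDom hl hk
  have h₂ := take_mem_unravDom hl (by omega : 1 ≤ k + 1)
  simp only [hM.2]
  rcases unravStep_take_succ_or hl hk hkl with h | h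
  · exact Or.inl ⟨h₁, h₂, .single h⟩
  · exact Or.inr ⟨h₂, h₁, .single h⟩

end Unravelling

lemma schemaTransfers_take {A Ω₀ : Type} (L : BILExtension A) {Θ : Set A}
    {M₀ : SKModel A Ω₀} {w₀ : Ω₀} {M : SKModel A (List Ω₀)} (hM : IsBiUnravelledForm M₀ w₀ M)
    {qp qm : List Ω₀ → A} {Mb : SKModel A (List Ω₀)} (hMb : IsBracket Θ qp qm M Mb)
    {wb : List Ω₀} (hwb : wb ∈ M.dom) {k : ℕ} (hk : 1 ≤ k) (hkn : k ≤ wb.length) :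
    SchemaTransfers L (bracketSig Θ M.dom qp qm) Mb (wb.take k) wb := by
  suffices h : ∀ m, k ≤ m → m ≤ wb.length →
      SchemaTransfers L (bracketSig Θ M.dom qp qm) Mb (wb.take k) (wb.take m) by
    simpa using h wb.length hkn le_rfl
  intro m hkm
  induction m, hkm using Nat.le_induction with
  | base => exact fun _ => .refl _
  | succ m hkm ih =>
    intro hmn
    have hc : wb.take (m + 1) ∈ M.dom := by
      rw [hM.1] at hwb ⊢
      exact take_mem_unravDom hwb (by omega)
    refine (ih (by omega)).trans (.of_isNominalPair (Or.inl (Or.inr ⟨_, hc, rfl⟩))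
      (Or.inr ⟨_, hc, rfl⟩) (hMb.isNominalPair hc) ?_)
    simpa only [hMb.2.1] using hM.rel_take_succ_or hwb (by omega) hmn

theorem bil_schema_bracket_general (A : Type) (L : BILExtension A)
    (Θ : Set A) (Ω₀ : Type) (M₀ : SKModel A Ω₀) (w₀ : Ω₀)
    (M : SKModel A (List Ω₀)) (hM : IsBiUnravelledForm M₀ w₀ M)
    (qp qm : List Ω₀ → A)
    (Mb : SKModel A (List Ω₀)) (hMb : IsBracket Θ qp qm M Mb) :
    ∀ wb ∈ M.dom, ∀ k : ℕ, 1 ≤ k → k ≤ wb.length →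
      ∃ (φs ψs θs τs : BILSchema A) (sφ sψ sθ sτ : Bool),
        φs.letters ⊆ bracketSig Θ M.dom qp qm ∧
        ψs.letters ⊆ bracketSig Θ M.dom qp qm ∧
        θs.letters ⊆ bracketSig Θ M.dom qp qm ∧
        τs.letters ⊆ bracketSig Θ M.dom qp qm ∧
        ∀ (Sg : Set A), bracketSig Θ M.dom qp qm ⊆ Sg →
          ∀ M' : SKModel A (List Ω₀), IsExpansion (bracketSig Θ M.dom qp qm) Mb M' →
            ∀ α ∈ L.In Sg, ∀ β ∈ L.In Sg,
              (signSat sφ (L.Sat M' (wb.take k) (φs.eval L α β)) ↔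
                ¬ L.Sat M' wb (L.fimpl α β)) ∧
              (signSat sψ (L.Sat M' (wb.take k) (ψs.eval L α β)) ↔
                L.Sat M' wb (L.fcoimpl α β)) ∧
              (signSat sθ (L.Sat M' (wb.take k) (θs.eval L α β)) ↔
                L.Sat M' wb (L.fimpl α β)) ∧
              (signSat sτ (L.Sat M' (wb.take k) (τs.eval L α β)) ↔
                ¬ L.Sat M' wb (L.fcoimpl α β)) := by
  intro wb hwb k hk hkn
  have htr := schemaTransfers_take L hM hMb hwb hk hkn
  have hletters : (∅ : Set A) ∪ ∅ ⊆ bracketSig Θ M.dom qp qm := by simp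
  obtain ⟨φs, sφ, hφ, Hφ⟩ := htr (.impl .v1 .v2) false hletters
  obtain ⟨ψs, sψ, hψ, Hψ⟩ := htr (.coimpl .v1 .v2) true hletters
  obtain ⟨θs, sθ, hθ, Hθ⟩ := htr (.impl .v1 .v2) true hletters
  obtain ⟨τs, sτ, hτ, Hτ⟩ := htr (.coimpl .v1 .v2) false hletters
  refine ⟨φs, ψs, θs, τs, sφ, sψ, sθ, sτ, hφ, hψ, hθ, hτ,
    fun Sg _ M' hM' α _ β _ => ⟨?_, ?_, ?_, ?_⟩⟩
  · simpa [signSat, BILSchema.eval] using Hφ M' hM' α β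
  · simpa [signSat, BILSchema.eval] using Hψ M' hM' α β
  · simpa [signSat, BILSchema.eval] using Hθ M' hM' α β
  · simpa [signSat, BILSchema.eval] using Hτ M' hM' α β

/-- Lemma 5.4. Let `L` extend `BIL`, be preserved under
bi-asimulations, ★-compact and have the TUP, and let `(M,[w₀])` be a pointed
bi-unravelled `Θ`-model (in canonical form, over `(M₀,w₀)`). Then for every
`w̄ₙ ∈ W^un_w` (a sequence `wb ∈ M.dom`, `n = wb.length > 0`) and every
`1 ≤ k ≤ n` there are binary formula schemas `φ, ψ, θ, τ` of `BIL(Θ_M)` and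
signs such that, for every signature `Sg ⊇ Θ_M`, every `Sg`-expansion `M'` of
`[M]` and all `α, β ∈ L(Sg)`, the four *biconditional* properties hold at
`w̄ₖ = wb.take k` and `w̄ₙ = wb`. -/
theorem bil_schema_bracket (A : Type) (L : BILExtension A)
    (hpres : L.toAbsLogic.Preserved)
    (hcomp : L.toAbsLogic.StarCompact)
    (htup : L.toAbsLogic.HasTUP)
    (Θ : Set A) (Ω₀ : Type) (M₀ : SKModel A Ω₀) (w₀ : Ω₀) (hw₀ : w₀ ∈ M₀.dom)
    (M : SKModel A (List Ω₀)) (hM : IsBiUnravelledForm M₀ w₀ M)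
    (qp qm : List Ω₀ → A) (hfresh : FreshLetters Θ M.dom qp qm)
    (Mb : SKModel A (List Ω₀)) (hMb : IsBracket Θ qp qm M Mb) :
    ∀ wb ∈ M.dom, ∀ k : ℕ, 1 ≤ k → k ≤ wb.length →
      ∃ (φs ψs θs τs : BILSchema A) (sφ sψ sθ sτ : Bool),
        φs.letters ⊆ bracketSig Θ M.dom qp qm ∧
        ψs.letters ⊆ bracketSig Θ M.dom qp qm ∧
        θs.letters ⊆ bracketSig Θ M.dom qp qm ∧
        τs.letters ⊆ bracketSig Θ M.dom qp qm ∧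
        ∀ (Sg : Set A), bracketSig Θ M.dom qp qm ⊆ Sg →
          ∀ M' : SKModel A (List Ω₀), IsExpansion (bracketSig Θ M.dom qp qm) Mb M' →
            ∀ α ∈ L.In Sg, ∀ β ∈ L.In Sg,
              (signSat sφ (L.Sat M' (wb.take k) (φs.eval L α β)) ↔
                ¬ L.Sat M' wb (L.fimpl α β)) ∧
              (signSat sψ (L.Sat M' (wb.take k) (ψs.eval L α β)) ↔
                L.Sat M' wb (L.fcoimpl α β)) ∧
              (signSat sθ (L.Sat M' (wb.take k) (θs.eval L α β)) ↔
                L.Sat M' wb (L.fimpl α β)) ∧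
              (signSat sτ (L.Sat M' (wb.take k) (τs.eval L α β)) ↔
                ¬ L.Sat M' wb (L.fcoimpl α β)) :=
  bil_schema_bracket_general A L Θ Ω₀ M₀ w₀ M hM qp qm Mb hMb
end

section
/- If L is an abstract bi-intuitionistic logic preserved under bi-asimulations, then every L-formula is monotone along the accessibility relation: for every pointed Θ-model (M,w), every v ∈ W with w ≺ v, and every φ ∈ L(Θ), if M,w ⊨_L φ then M,v ⊨_L φ. -/
theorem SKModel.isBiAsim_rel {A Ω : Type} (Θ : Set A) (M : SKModel A Ω) {w v : Ω}
    (hwv : M.rel w v) : IsBiAsim Θ M M w v M.rel (fun a b => a = b ∧ a ∈ M.dom) where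
  memR := M.rel_mem
  memS := by
    rintro a _ ⟨rfl, ha⟩
    exact ⟨ha, ha⟩
  elem := hwv
  atomR p _ := M.val_mono p
  atomS := by
    rintro p _ a _ ⟨rfl, -⟩ hp
    exact hp
  backR {_ _ t} hxy hyt :=
    have ht := (M.rel_mem hyt).2
    ⟨t, M.rel_trans hxy hyt, ⟨rfl, ht⟩, M.rel_refl t ht⟩
  backS := by
    rintro x _ t ⟨rfl, -⟩ hxt
    have ht := (M.rel_mem hxt).2
    exact ⟨t, hxt, M.rel_refl t ht, rfl, ht⟩
  forthR {_ _ u} hxy hux :=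
    have hu := (M.rel_mem hux).1
    ⟨u, M.rel_trans hux hxy, ⟨rfl, hu⟩, M.rel_refl u hu⟩
  forthS := by
    rintro x _ u ⟨rfl, -⟩ hux
    have hu := (M.rel_mem hux).1
    exact ⟨u, hux, M.rel_refl u hu, rfl, hu⟩

theorem bil_monotonicity_general (A : Type) (L : AbsLogic A) (hpres : L.Preserved)
    (Θ : Set A) (Ω : Type) (M : SKModel A Ω) (w v : Ω)
    (hwv : M.rel w v) (φ : L.F) (hφ : φ ∈ L.In Θ) :
    L.Sat M w φ → L.Sat M v φ :=
  hpres Θ Ω Ω M M w v _ _ (M.isBiAsim_rel Θ hwv) φ hφ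

/-- Lemma 4.3, monotonicity. If an abstract
bi-intuitionistic logic `L` is preserved under bi-asimulations, then every
`L`-formula is monotone along the accessibility relation. -/
theorem bil_monotonicity (A : Type) (L : AbsLogic A) (hpres : L.Preserved)
    (Θ : Set A) (Ω : Type) (M : SKModel A Ω) (w v : Ω) (hw : w ∈ M.dom)
    (hwv : M.rel w v) (φ : L.F) (hφ : φ ∈ L.In Θ) :
    L.Sat M w φ → L.Sat M v φ :=
  bil_monotonicity_general A L hpres Θ Ω M w v hwv φ hφ
end

section
/- Let L be an abstract bi-intuitionistic logic extending BIL, and let (M₁,w₁), (M₂,w₂) be pointed Θ-models with Th⁺_BIL(M₁,w₁) ⊆ Th⁺_BIL(M₂,w₂), where both M₁ and M₂ are L-saturated. Then the relation A defined by u A s iff Th⁺_BIL(M_i,u) ⊆ Th⁺_BIL(M_j,s) (for u ∈ W_i, s ∈ W_j, {i,j} = {1,2}) is a bi-asimulation from (M₁,w₁) to (M₂,w₂). -/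
/-! If `Th⁺(v) ⊆ Th⁺(s)` and `s ≺ t`, the whole BIL-theory of `t` (true and false formulas) is
finitely satisfiable among the successors of `v`: otherwise some `⋀Γ → ⋁Δ` holds at `v`, hence
at `s`, and fails at `t`. Dually, for `u ≺ v` the theory of `u` is finitely satisfiable among the
predecessors of `s`, by transferring `⋀Γ ≪ ⋁Δ`. Saturation realizes these types, and a world
realizing the full theory of another has exactly the same theory. `L`-saturation suffices because
BIL-types are `L`-types via the embedding `ofBIL`. -/

variable {A : Type}

lemma exists_bilSat_iff_forall_mem {Θ : Set A} {Γ : Set (BILForm A)} (hΓ : Γ.Finite)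
    (hΓΘ : ∀ φ ∈ Γ, φ.letters ⊆ Θ) :
    ∃ χ : BILForm A, χ.letters ⊆ Θ ∧
      ∀ {Ω : Type} (M : SKModel A Ω) (w : Ω), BILSat M χ w ↔ ∀ φ ∈ Γ, BILSat M φ w := by
  induction Γ, hΓ using Set.Finite.induction_on with
  | empty =>
    exact ⟨.impl .bot .bot, by simp [BILForm.letters], fun M w => by simp [BILSat]⟩
  | @insert φ Γ _ _ ih =>
    obtain ⟨χ, hχΘ, hχ⟩ := ih fun ψ hψ => hΓΘ ψ (Set.mem_insert_of_mem φ hψ)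
    refine ⟨.conj φ χ, Set.union_subset (hΓΘ φ (Set.mem_insert φ Γ)) hχΘ, fun M w => ?_⟩
    simp [BILSat, hχ]

lemma exists_bilSat_iff_exists_mem {Θ : Set A} {Δ : Set (BILForm A)} (hΔ : Δ.Finite)
    (hΔΘ : ∀ φ ∈ Δ, φ.letters ⊆ Θ) :
    ∃ χ : BILForm A, χ.letters ⊆ Θ ∧
      ∀ {Ω : Type} (M : SKModel A Ω) (w : Ω), BILSat M χ w ↔ ∃ φ ∈ Δ, BILSat M φ w := by
  induction Δ, hΔ using Set.Finite.induction_on with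
  | empty => exact ⟨.bot, by simp [BILForm.letters], fun M w => by simp [BILSat]⟩
  | @insert φ Δ _ _ ih =>
    obtain ⟨χ, hχΘ, hχ⟩ := ih fun ψ hψ => hΔΘ ψ (Set.mem_insert_of_mem φ hψ)
    refine ⟨.disj φ χ, Set.union_subset (hΔΘ φ (Set.mem_insert φ Δ)) hχΘ, fun M w => ?_⟩
    simp [BILSat, hχ]

def bilTh {Ω : Type} (Θ : Set A) (M : SKModel A Ω) (w : Ω) : Set (BILForm A) :=
  {φ | φ.letters ⊆ Θ ∧ BILSat M φ w}

def bilNegTh {Ω : Type} (Θ : Set A) (M : SKModel A Ω) (w : Ω) : Set (BILForm A) :=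
  {φ | φ.letters ⊆ Θ ∧ ¬ BILSat M φ w}

section Theories

variable {Ω₁ Ω₂ : Type} {Θ : Set A} {M : SKModel A Ω₁} {N : SKModel A Ω₂}

lemma BILThEq.of_bilSatTh {u : Ω₁} {t : Ω₂}
    (h : BILSatTh M u (bilTh Θ N t) (bilNegTh Θ N t)) : BILThEq Θ N t M u :=
  fun φ hφ => ⟨fun hφt => h.1 φ ⟨hφ, hφt⟩, fun hφu => by_contra fun hφt => h.2 φ ⟨hφ, hφt⟩ hφu⟩

lemma bilSuccType_bilTh_of_rel {v : Ω₁} {s t : Ω₂} (hvs : BILThPosSubset Θ M v N s)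
    (hst : N.rel s t) : BILSuccType Θ M v (bilTh Θ N t) (bilNegTh Θ N t) := by
  refine ⟨fun φ hφ => hφ.1, fun φ hφ => hφ.1, fun Γ hΓ Δ hΔ hΓf hΔf => ?_⟩
  obtain ⟨γ, hγΘ, hγ⟩ := exists_bilSat_iff_forall_mem hΓf fun φ hφ => (hΓ hφ).1
  obtain ⟨δ, hδΘ, hδ⟩ := exists_bilSat_iff_exists_mem hΔf fun φ hφ => (hΔ hφ).1
  by_contra! hnone
  have hv : BILSat M (.impl γ δ) v := fun u hvu hγu => by
    by_contra hδu
    exact hnone u hvu ⟨(hγ M u).1 hγu, fun ψ hψ hψu => hδu ((hδ M u).2 ⟨ψ, hψ, hψu⟩)⟩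
  have hδt : BILSat N δ t :=
    hvs (.impl γ δ) (Set.union_subset hγΘ hδΘ) hv t hst ((hγ N t).2 fun φ hφ => (hΓ hφ).2)
  obtain ⟨ψ, hψ, hψt⟩ := (hδ N t).1 hδt
  exact (hΔ hψ).2 hψt

lemma bilPredType_bilTh_of_rel {u v : Ω₁} {s : Ω₂} (hvs : BILThPosSubset Θ M v N s)
    (huv : M.rel u v) : BILPredType Θ N s (bilTh Θ M u) (bilNegTh Θ M u) := by
  refine ⟨fun φ hφ => hφ.1, fun φ hφ => hφ.1, fun Γ hΓ Δ hΔ hΓf hΔf => ?_⟩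
  obtain ⟨γ, hγΘ, hγ⟩ := exists_bilSat_iff_forall_mem hΓf fun φ hφ => (hΓ hφ).1
  obtain ⟨δ, hδΘ, hδ⟩ := exists_bilSat_iff_exists_mem hΔf fun φ hφ => (hΔ hφ).1
  have hv : BILSat M (.coimpl γ δ) v := by
    refine ⟨u, huv, (hγ M u).2 fun φ hφ => (hΓ hφ).2, fun hδu => ?_⟩
    obtain ⟨ψ, hψ, hψu⟩ := (hδ M u).1 hδu
    exact (hΔ hψ).2 hψu
  obtain ⟨t, hts, hγt, hδt⟩ := hvs (.coimpl γ δ) (Set.union_subset hγΘ hδΘ) hv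
  exact ⟨t, hts, (hγ N t).1 hγt, fun ψ hψ hψt => hδt ((hδ N t).2 ⟨ψ, hψ, hψt⟩)⟩

lemma BILSaturated.exists_succ_bilThEq (hM : BILSaturated Θ M) {v : Ω₁} {s t : Ω₂}
    (hv : v ∈ M.dom) (hvs : BILThPosSubset Θ M v N s) (hst : N.rel s t) :
    ∃ u, M.rel v u ∧ BILThEq Θ N t M u :=
  let ⟨u, hvu, hu⟩ := (hM v hv _ _).1 (bilSuccType_bilTh_of_rel hvs hst)
  ⟨u, hvu, .of_bilSatTh hu⟩

lemma BILSaturated.exists_pred_bilThEq (hN : BILSaturated Θ N) {u v : Ω₁} {s : Ω₂}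
    (hs : s ∈ N.dom) (hvs : BILThPosSubset Θ M v N s) (huv : M.rel u v) :
    ∃ t, N.rel t s ∧ BILThEq Θ M u N t :=
  let ⟨t, hts, ht⟩ := (hN s hs _ _).2 (bilPredType_bilTh_of_rel hvs huv)
  ⟨t, hts, .of_bilSatTh ht⟩

end Theories

theorem isBiAsim_bilThPosSubset {Θ : Set A} {Ω₁ Ω₂ : Type} {M₁ : SKModel A Ω₁}
    {M₂ : SKModel A Ω₂} {w₁ : Ω₁} {w₂ : Ω₂} (hw₁ : w₁ ∈ M₁.dom) (hw₂ : w₂ ∈ M₂.dom)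
    (hsub : BILThPosSubset Θ M₁ w₁ M₂ w₂) (hM₁ : BILSaturated Θ M₁) (hM₂ : BILSaturated Θ M₂) :
    IsBiAsim Θ M₁ M₂ w₁ w₂
      (fun u s => u ∈ M₁.dom ∧ s ∈ M₂.dom ∧ BILThPosSubset Θ M₁ u M₂ s)
      (fun u s => u ∈ M₂.dom ∧ s ∈ M₁.dom ∧ BILThPosSubset Θ M₂ u M₁ s) where
  memR h := ⟨h.1, h.2.1⟩
  memS h := ⟨h.1, h.2.1⟩
  elem := ⟨hw₁, hw₂, hsub⟩
  atomR p hp _ _ h := h.2.2 (.atom p) (by simpa [BILForm.letters] using hp)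
  atomS p hp _ _ h := h.2.2 (.atom p) (by simpa [BILForm.letters] using hp)
  backR := fun ⟨hv, _, hvs⟩ hst =>
    let ⟨u, hvu, hu⟩ := hM₁.exists_succ_bilThEq hv hvs hst
    ⟨u, hvu, ⟨(M₂.rel_mem hst).2, (M₁.rel_mem hvu).2, fun φ hφ => (hu φ hφ).1⟩,
      ⟨(M₁.rel_mem hvu).2, (M₂.rel_mem hst).2, fun φ hφ => (hu φ hφ).2⟩⟩
  backS := fun ⟨hv, _, hvs⟩ hst =>
    let ⟨u, hvu, hu⟩ := hM₂.exists_succ_bilThEq hv hvs hst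
    ⟨u, hvu, ⟨(M₁.rel_mem hst).2, (M₂.rel_mem hvu).2, fun φ hφ => (hu φ hφ).1⟩,
      ⟨(M₂.rel_mem hvu).2, (M₁.rel_mem hst).2, fun φ hφ => (hu φ hφ).2⟩⟩
  forthR := fun ⟨_, hs, hvs⟩ huv =>
    let ⟨t, hts, ht⟩ := hM₂.exists_pred_bilThEq hs hvs huv
    ⟨t, hts, ⟨(M₂.rel_mem hts).1, (M₁.rel_mem huv).1, fun φ hφ => (ht φ hφ).2⟩,
      ⟨(M₁.rel_mem huv).1, (M₂.rel_mem hts).1, fun φ hφ => (ht φ hφ).1⟩⟩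
  forthS := fun ⟨_, hs, hvs⟩ huv =>
    let ⟨t, hts, ht⟩ := hM₁.exists_pred_bilThEq hs hvs huv
    ⟨t, hts, ⟨(M₁.rel_mem hts).1, (M₂.rel_mem huv).1, fun φ hφ => (ht φ hφ).2⟩,
      ⟨(M₂.rel_mem huv).1, (M₁.rel_mem hts).1, fun φ hφ => (ht φ hφ).1⟩⟩

namespace BILExtension

variable (L : BILExtension A) {Ω : Type} {Θ : Set A} {M : SKModel A Ω}

lemma satTh_image_ofBIL {w : Ω} {Γ Δ : Set (BILForm A)} :
    L.SatTh M w (L.ofBIL '' Γ) (L.ofBIL '' Δ) ↔ BILSatTh M w Γ Δ := by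
  simp [AbsLogic.SatTh, BILSatTh, L.sat_ofBIL]

lemma exists_satTh_of_subset_image {r : Ω → Prop} {Γ Δ : Set (BILForm A)}
    (h : ∀ Γ' ⊆ Γ, ∀ Δ' ⊆ Δ, Γ'.Finite → Δ'.Finite → ∃ u, r u ∧ BILSatTh M u Γ' Δ')
    {Γ' Δ' : Set L.F} (hΓ' : Γ' ⊆ L.ofBIL '' Γ) (hΔ' : Δ' ⊆ L.ofBIL '' Δ)
    (hΓf : Γ'.Finite) (hΔf : Δ'.Finite) : ∃ u, r u ∧ L.SatTh M u Γ' Δ' := by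
  obtain ⟨Γ₀, hΓ₀, hΓ₀f, rfl⟩ := hΓf.exists_subset_finite_image_eq hΓ'
  obtain ⟨Δ₀, hΔ₀, hΔ₀f, rfl⟩ := hΔf.exists_subset_finite_image_eq hΔ'
  obtain ⟨u, hu, hsat⟩ := h Γ₀ hΓ₀ Δ₀ hΔ₀ hΓ₀f hΔ₀f
  exact ⟨u, hu, (L.satTh_image_ofBIL).2 hsat⟩

lemma succType_image_ofBIL {v : Ω} {Γ Δ : Set (BILForm A)} (h : BILSuccType Θ M v Γ Δ) :
    L.SuccType Θ M v (L.ofBIL '' Γ) (L.ofBIL '' Δ) :=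
  ⟨Set.image_subset_iff.2 fun φ hφ => L.ofBIL_mem Θ φ (h.1 φ hφ),
    Set.image_subset_iff.2 fun φ hφ => L.ofBIL_mem Θ φ (h.2.1 φ hφ),
    fun _ hΓ' _ hΔ' => L.exists_satTh_of_subset_image h.2.2 hΓ' hΔ'⟩

lemma predType_image_ofBIL {v : Ω} {Γ Δ : Set (BILForm A)} (h : BILPredType Θ M v Γ Δ) :
    L.PredType Θ M v (L.ofBIL '' Γ) (L.ofBIL '' Δ) :=
  ⟨Set.image_subset_iff.2 fun φ hφ => L.ofBIL_mem Θ φ (h.1 φ hφ),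
    Set.image_subset_iff.2 fun φ hφ => L.ofBIL_mem Θ φ (h.2.1 φ hφ),
    fun _ hΓ' _ hΔ' => L.exists_satTh_of_subset_image h.2.2 hΓ' hΔ'⟩

lemma bilSaturated_of_saturated (h : L.Saturated Θ M) : BILSaturated Θ M := by
  intro v hv Γ Δ
  constructor
  · intro hΓΔ
    obtain ⟨u, hvu, hu⟩ := (h v hv _ _).1 (L.succType_image_ofBIL hΓΔ)
    exact ⟨u, hvu, L.satTh_image_ofBIL.1 hu⟩
  · intro hΓΔ
    obtain ⟨u, huv, hu⟩ := (h v hv _ _).2 (L.predType_image_ofBIL hΓΔ)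
    exact ⟨u, huv, L.satTh_image_ofBIL.1 hu⟩

end BILExtension

/-- Corollary 4.1. Let `L` extend `BIL` and let
`(M₁,w₁)`, `(M₂,w₂)` be pointed `Θ`-models with
`Th⁺_BIL(M₁,w₁) ⊆ Th⁺_BIL(M₂,w₂)`, both `L`-saturated. Then the relation
defined by inclusion of positive BIL-theories is a bi-asimulation from
`(M₁,w₁)` to `(M₂,w₂)`. -/
theorem bil_asimulation_corollary (A : Type) (L : BILExtension A)
    (Θ : Set A) (Ω₁ Ω₂ : Type) (M₁ : SKModel A Ω₁) (M₂ : SKModel A Ω₂)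
    (w₁ : Ω₁) (w₂ : Ω₂) (hw₁ : w₁ ∈ M₁.dom) (hw₂ : w₂ ∈ M₂.dom)
    (hsub : BILThPosSubset Θ M₁ w₁ M₂ w₂)
    (hsat₁ : L.toAbsLogic.Saturated Θ M₁)
    (hsat₂ : L.toAbsLogic.Saturated Θ M₂) :
    IsBiAsim Θ M₁ M₂ w₁ w₂
      (fun u s => u ∈ M₁.dom ∧ s ∈ M₂.dom ∧ BILThPosSubset Θ M₁ u M₂ s)
      (fun u s => u ∈ M₂.dom ∧ s ∈ M₁.dom ∧ BILThPosSubset Θ M₂ u M₁ s) :=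
  isBiAsim_bilThPosSubset hw₁ hw₂ hsub (L.bilSaturated_of_saturated hsat₁)
    (L.bilSaturated_of_saturated hsat₂)
end
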